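/- arXiv:2605.17688 — 6 statements merged into one kernel-verified Lean document; each statement's English description precedes it below -/
import Mathlib

section
/- Let n ≥ 1 and let f : ℝⁿ → [0,∞) be upper semicontinuous such that for every s > 0 the superlevel set K_s = {x : f(x) ≥ s} is compact and convex (possibly empty). Define F(t) = ∫₀^∞ vol(K_s + tB) ds for t ≥ 0, and assume F(t₀) < ∞ for some t₀ > 0. Then there is a function S : (0,∞) → [0,∞) such that: (1) for every s > 0, (vol(K_s + tB) − vol(K_s))/t → S(s) as t → 0⁺ (so S(s) is the Minkowski surface area of K_s, with S(s) = 0 when K_s = ∅); (2) ∫₀^∞ S(s) ds < ∞; and (3) (F(t) − F(0))/t → ∫₀^∞ S(s) ds as t → 0⁺, i.e., F is right-differentiable at 0 with derivative ∫₀^∞ S(s) ds. -/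
/-!
For a compact convex set `K`, the outer parallel volume `h(t) = vol(K + tB) - vol K` is
superadditive in `t ≥ 0`: the shell `(K + δB) \ K` is the image of the shell
`(K + (a + δ)B) \ (K + aB)` under the map that moves each point a distance `a` towards its
nearest point in `K`, and this map is `1`-Lipschitz, so it does not increase volume.
A nonnegative superadditive function satisfies `h s / s ≤ h t / (t - s)` for `s < t`, so
`h t / t` converges as `t → 0⁺` to its infimum `S`, and `h s / s ≤ 2 h t₀ / t₀` for `s ≤ t₀`.
Applied to the level sets `K_s`, this bound is integrable in `s` because `F t₀ < ∞`, and
dominated convergence gives the right derivative of `F` at `0`.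
-/

open MeasureTheory Filter Set Metric
open scoped Topology ENNReal Pointwise

noncomputable section

abbrev Euc (n : ℕ) := EuclideanSpace ℝ (Fin n)

open scoped RealInnerProductSpace

structure NonnegSuperadditive (h : ℝ → ℝ) : Prop where
  nonneg : ∀ ⦃t⦄, 0 ≤ t → 0 ≤ h t
  add_le : ∀ ⦃a b⦄, 0 ≤ a → 0 ≤ b → h a + h b ≤ h (a + b)

def initialSlope (h : ℝ → ℝ) : ℝ := ⨅ t : Ioi (0 : ℝ), h t / t

namespace NonnegSuperadditive

variable {h : ℝ → ℝ}

theorem monotoneOn (hh : NonnegSuperadditive h) : MonotoneOn h (Ici 0) := by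
  intro a ha b _ hab
  have hba : 0 ≤ b - a := sub_nonneg.2 hab
  simpa using add_le_add_right (hh.nonneg hba) (h a) |>.trans (hh.add_le ha hba)

theorem natCast_mul_le (hh : NonnegSuperadditive h) (k : ℕ) {t : ℝ} (ht : 0 ≤ t) :
    k * h t ≤ h (k * t) := by
  induction k with
  | zero => simpa using hh.nonneg le_rfl
  | succ k ih =>
    calc ((k + 1 : ℕ) : ℝ) * h t = k * h t + h t := by push_cast; ring
      _ ≤ h (k * t) + h t := by gcongr
      _ ≤ h ((k + 1 : ℕ) * t) := by
        convert hh.add_le (a := k * t) (by positivity) ht using 2; push_cast; ring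

theorem mul_sub_le (hh : NonnegSuperadditive h) {s t : ℝ} (hs : 0 < s) (hst : s ≤ t) :
    h s * (t - s) ≤ h t * s := by
  set k := ⌊t / s⌋₊
  have hk : t - s < k * s := by
    have := Nat.lt_floor_add_one (t / s)
    rw [div_lt_iff₀ hs] at this
    linarith
  have hkt : k * s ≤ t := (le_div_iff₀ hs).1 (Nat.floor_le (div_nonneg (hs.le.trans hst) hs.le))
  calc h s * (t - s) ≤ h s * (k * s) := by gcongr; exact hh.nonneg hs.le
    _ = k * h s * s := by ring
    _ ≤ h t * s := by
      gcongr
      exact (hh.natCast_mul_le k hs.le).trans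
        (hh.monotoneOn (mem_Ici.2 (by positivity)) (mem_Ici.2 (hs.le.trans hst)) hkt)

theorem div_le_two_mul_div (hh : NonnegSuperadditive h) {s t : ℝ} (hs : 0 < s) (hst : s ≤ t) :
    h s / s ≤ 2 * h t / t := by
  have hmono : h s * s ≤ h t * s :=
    mul_le_mul_of_nonneg_right (hh.monotoneOn (mem_Ici.2 hs.le) (mem_Ici.2 (hs.le.trans hst)) hst)
      hs.le
  rw [div_le_div_iff₀ hs (hs.trans_le hst)]
  linarith [hh.mul_sub_le hs hst]

theorem bddBelow_div (hh : NonnegSuperadditive h) :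
    BddBelow (range fun t : Ioi (0 : ℝ) => h t / t) :=
  ⟨0, by rintro _ ⟨t, rfl⟩; exact div_nonneg (hh.nonneg t.2.le) t.2.le⟩

theorem initialSlope_nonneg (hh : NonnegSuperadditive h) : 0 ≤ initialSlope h :=
  le_ciInf fun t => div_nonneg (hh.nonneg t.2.le) t.2.le

theorem initialSlope_le_div (hh : NonnegSuperadditive h) {t : ℝ} (ht : 0 < t) :
    initialSlope h ≤ h t / t :=
  ciInf_le hh.bddBelow_div ⟨t, ht⟩

theorem tendsto_initialSlope (hh : NonnegSuperadditive h) :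
    Tendsto (fun t => h t / t) (𝓝[>] 0) (𝓝 (initialSlope h)) := by
  refine tendsto_order.2 ⟨fun c hc => ?_, fun c hc => ?_⟩
  · filter_upwards [self_mem_nhdsWithin] with s hs
    exact hc.trans_le (hh.initialSlope_le_div hs)
  · obtain ⟨⟨t, ht : 0 < t⟩, htc⟩ := exists_lt_of_ciInf_lt hc
    -- `h s / s ≤ h t / (t - s)`, and the right-hand side tends to `h t / t < c`
    have hlim : Tendsto (fun s => h t / (t - s)) (𝓝[>] 0) (𝓝 (h t / t)) := by
      refine Tendsto.mono_left ?_ nhdsWithin_le_nhds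
      have := (tendsto_const_nhds (x := t)).sub (tendsto_id (x := 𝓝 (0 : ℝ)))
      rw [sub_zero] at this
      exact tendsto_const_nhds.div this ht.ne'
    filter_upwards [hlim.eventually_lt_const htc, self_mem_nhdsWithin,
      nhdsWithin_le_nhds (gt_mem_nhds ht)] with s hsc hs hst
    refine lt_of_le_of_lt ?_ hsc
    rw [div_le_div_iff₀ hs (sub_pos.2 hst)]
    exact hh.mul_sub_le hs hst.le

end NonnegSuperadditive

section Parametric

variable {α : Type*} [MeasurableSpace α] {ν : Measure α} {h : α → ℝ → ℝ}

theorem aestronglyMeasurable_initialSlope (hh : ∀ᵐ a ∂ν, NonnegSuperadditive (h a))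
    (hm : ∀ t, Measurable fun a => h a t) :
    AEStronglyMeasurable (fun a => initialSlope (h a)) ν := by
  have hseq : Tendsto (fun k : ℕ => 1 / ((k : ℝ) + 1)) atTop (𝓝[>] 0) :=
    tendsto_nhdsWithin_iff.2 ⟨tendsto_one_div_add_atTop_nhds_zero_nat,
      Eventually.of_forall fun _ => mem_Ioi.2 Nat.one_div_pos_of_nat⟩
  refine aestronglyMeasurable_of_tendsto_ae atTop
    (f := fun (k : ℕ) a => h a (1 / ((k : ℝ) + 1)) / (1 / ((k : ℝ) + 1)))
    (fun k => ((hm _).div_const _).aestronglyMeasurable) ?_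
  filter_upwards [hh] with a ha
  exact ha.tendsto_initialSlope.comp hseq

theorem integrable_initialSlope (hh : ∀ᵐ a ∂ν, NonnegSuperadditive (h a))
    (hm : ∀ t, Measurable fun a => h a t) {t₀ : ℝ} (ht₀ : 0 < t₀)
    (hint : Integrable (fun a => h a t₀) ν) :
    Integrable (fun a => initialSlope (h a)) ν := by
  refine (hint.div_const t₀).mono' (aestronglyMeasurable_initialSlope hh hm) ?_
  filter_upwards [hh] with a ha
  rw [Real.norm_of_nonneg ha.initialSlope_nonneg]
  exact ha.initialSlope_le_div ht₀

theorem tendsto_integral_div_initialSlope (hh : ∀ᵐ a ∂ν, NonnegSuperadditive (h a))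
    (hm : ∀ t, Measurable fun a => h a t) {t₀ : ℝ} (ht₀ : 0 < t₀)
    (hint : Integrable (fun a => h a t₀) ν) :
    Tendsto (fun t => ∫ a, h a t / t ∂ν) (𝓝[>] 0) (𝓝 (∫ a, initialSlope (h a) ∂ν)) := by
  refine tendsto_integral_filter_of_dominated_convergence (fun a => 2 * h a t₀ / t₀)
    (Eventually.of_forall fun t => ((hm t).div_const t).aestronglyMeasurable) ?_
    ((hint.const_mul 2).div_const t₀) ?_
  · filter_upwards [Ioc_mem_nhdsGT ht₀] with t ⟨ht, htt₀⟩
    filter_upwards [hh] with a ha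
    rw [Real.norm_of_nonneg (div_nonneg (ha.nonneg ht.le) ht.le)]
    exact ha.div_le_two_mul_div ht htt₀
  · filter_upwards [hh] with a ha
    exact ha.tendsto_initialSlope

end Parametric

section MetricProj

variable {E : Type*} [NormedAddCommGroup E] [InnerProductSpace ℝ E] {K : Set E} {x p q : E}

-- The variational characterization of the nearest point of a convex set.
def IsMetricProj (K : Set E) (x p : E) : Prop :=
  p ∈ K ∧ ∀ w ∈ K, ⟪x - p, w - p⟫ ≤ 0

def metricProj (K : Set E) (x : E) : E :=
  Classical.epsilon (IsMetricProj K x)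

theorem IsMetricProj.eq (hp : IsMetricProj K x p) (hq : IsMetricProj K x q) : p = q := by
  have hpq : ‖q - p‖ ^ 2 = ⟪x - p, q - p⟫ + ⟪x - q, p - q⟫ := by
    rw [← real_inner_self_eq_norm_sq]
    simp only [inner_sub_left, inner_sub_right, real_inner_comm]
    ring
  have : ‖q - p‖ ^ 2 ≤ 0 := by linarith [hp.2 q hq.1, hq.2 p hp.1]
  exact (sub_eq_zero.1 (by simpa using this)).symm

theorem IsMetricProj.norm_sub_le (hp : IsMetricProj K x p) {k : E} (hk : k ∈ K) :
    ‖x - p‖ ≤ ‖x - k‖ := by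
  have hsq : ‖x - k‖ ^ 2 = ‖x - p‖ ^ 2 - 2 * ⟪x - p, k - p⟫ + ‖k - p‖ ^ 2 := by
    rw [← norm_sub_sq_real, sub_sub_sub_cancel_right]
  nlinarith [hp.2 k hk, norm_nonneg (x - k), norm_nonneg (x - p)]

theorem IsMetricProj.add_smul_sub (hp : IsMetricProj K x p) {c : ℝ} (hc : 0 ≤ c) :
    IsMetricProj K (p + c • (x - p)) p :=
  ⟨hp.1, fun w hw => by
    simpa [real_inner_smul_left] using mul_nonpos_of_nonneg_of_nonpos hc (hp.2 w hw)⟩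

theorem isMetricProj_metricProj (hK : IsComplete K) (hc : Convex ℝ K) (hne : K.Nonempty)
    (x : E) : IsMetricProj K x (metricProj K x) := by
  obtain ⟨p, hp, hmin⟩ := exists_norm_eq_iInf_of_complete_convex hne hK hc x
  exact Classical.epsilon_spec ⟨p, hp, (norm_eq_iInf_iff_real_inner_le_zero hc hp).1 hmin⟩

theorem add_closedBall_eq (hK : IsComplete K) (hc : Convex ℝ K) (hne : K.Nonempty) (r : ℝ) :
    K + closedBall (0 : E) r = {x | ‖x - metricProj K x‖ ≤ r} := by
  ext x
  constructor
  · rintro ⟨k, hk, b, hb, rfl⟩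
    calc ‖k + b - metricProj K (k + b)‖ ≤ ‖k + b - k‖ :=
          (isMetricProj_metricProj hK hc hne _).norm_sub_le hk
      _ ≤ r := by simpa using hb
  · intro hx
    exact ⟨metricProj K x, (isMetricProj_metricProj hK hc hne x).1, x - metricProj K x,
      by simpa using hx, add_sub_cancel _ _⟩

-- Two points, each moved a distance `a` towards its nearest point `p`, `q` of a convex set,
-- do not move apart.
theorem norm_sub_smul_sub_sub_le_of_inner_nonpos {a : ℝ} (ha : 0 ≤ a) {x y p q : E}
    (hx : a ≤ ‖x - p‖) (hy : a ≤ ‖y - q‖) (hp : ⟪x - p, q - p⟫ ≤ 0) (hq : ⟪y - q, p - q⟫ ≤ 0) :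
    ‖x - (a / ‖x - p‖) • (x - p) - (y - (a / ‖y - q‖) • (y - q))‖ ≤ ‖x - y‖ := by
  rcases ha.eq_or_lt with rfl | ha
  · simp
  set u := x - p
  set v := y - q
  have hu : 0 < ‖u‖ := ha.trans_le hx
  have hv : 0 < ‖v‖ := ha.trans_le hy
  set w := ‖u‖⁻¹ • u - ‖v‖⁻¹ • v
  have hw : ‖w‖ ^ 2 = 2 - 2 * ⟪u, v⟫ / (‖u‖ * ‖v‖) := by
    rw [← real_inner_self_eq_norm_sq]
    simp only [w, inner_sub_left, inner_sub_right, real_inner_smul_left, real_inner_smul_right,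
      real_inner_self_eq_norm_sq, real_inner_comm u v, norm_smul, norm_inv, norm_norm]
    field_simp
    ring
  have hwpq : 0 ≤ ⟪w, p - q⟫ := by
    have hp' : ⟪u, p - q⟫ = -⟪u, q - p⟫ := by rw [← inner_neg_right, neg_sub]
    simp only [w, inner_sub_left, real_inner_smul_left, hp']
    nlinarith [mul_nonpos_of_nonneg_of_nonpos (inv_pos.2 hu).le hp,
      mul_nonpos_of_nonneg_of_nonpos (inv_pos.2 hv).le hq]
  have hwuv : ⟪w, u - v⟫ = (‖u‖ + ‖v‖) / 2 * ‖w‖ ^ 2 := by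
    rw [hw]
    simp only [w, inner_sub_left, inner_sub_right, real_inner_smul_left,
      real_inner_self_eq_norm_sq, real_inner_comm u v]
    field_simp
    ring
  have hwz : a * ‖w‖ ^ 2 ≤ ⟪w, x - y⟫ := by
    have hxy : x - y = (p - q) + (u - v) := by simp only [u, v]; abel
    rw [hxy, inner_add_right, hwuv]
    nlinarith [sq_nonneg ‖w‖]
  have hmove : x - (a / ‖u‖) • u - (y - (a / ‖v‖) • v) = (x - y) - a • w := by
    simp only [w, smul_sub, smul_smul, div_eq_mul_inv]
    abel
  rw [hmove]
  have hsq : ‖x - y - a • w‖ ^ 2 ≤ ‖x - y‖ ^ 2 := by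
    rw [norm_sub_sq_real, norm_smul, real_inner_smul_right, real_inner_comm,
      Real.norm_of_nonneg ha.le]
    nlinarith [sq_nonneg ‖w‖]
  exact pow_le_pow_iff_left₀ (norm_nonneg _) (norm_nonneg _) two_ne_zero |>.1 hsq

def moveTowards (K : Set E) (a : ℝ) (x : E) : E :=
  x - (a / ‖x - metricProj K x‖) • (x - metricProj K x)

theorem lipschitzOnWith_moveTowards (hK : IsComplete K) (hc : Convex ℝ K) (hne : K.Nonempty)
    {a : ℝ} (ha : 0 ≤ a) :
    LipschitzOnWith 1 (moveTowards K a) {x | a ≤ ‖x - metricProj K x‖} := by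
  refine LipschitzOnWith.of_dist_le_mul fun x hx y hy => ?_
  have hpx := isMetricProj_metricProj hK hc hne x
  have hpy := isMetricProj_metricProj hK hc hne y
  simpa [dist_eq_norm, moveTowards] using
    norm_sub_smul_sub_sub_le_of_inner_nonpos ha hx hy (hpx.2 _ hpy.1) (hpy.2 _ hpx.1)

theorem add_closedBall_diff_subset_image_moveTowards (hK : IsComplete K) (hc : Convex ℝ K)
    (hne : K.Nonempty) {a : ℝ} (ha : 0 ≤ a) (δ : ℝ) :
    (K + closedBall (0 : E) δ) \ K ⊆
      moveTowards K a '' ((K + closedBall (0 : E) (a + δ)) \ (K + closedBall (0 : E) a)) := by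
  rintro z ⟨hzδ, hzK⟩
  rw [add_closedBall_eq hK hc hne] at hzδ
  set p := metricProj K z
  have hp : IsMetricProj K z p := isMetricProj_metricProj hK hc hne z
  have hd : 0 < ‖z - p‖ := norm_pos_iff.2 (sub_ne_zero.2 fun h => hzK (h ▸ hp.1))
  -- push `z` a further distance `a` away from `K` along the ray from its projection
  set c := 1 + a / ‖z - p‖
  have hc0 : 0 < c := by positivity
  have hpx : IsMetricProj K (p + c • (z - p)) p := hp.add_smul_sub hc0.le
  have hproj : metricProj K (p + c • (z - p)) = p :=
    (isMetricProj_metricProj hK hc hne _).eq hpx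
  have hdist : ‖p + c • (z - p) - metricProj K (p + c • (z - p))‖ = ‖z - p‖ + a := by
    rw [hproj, add_sub_cancel_left, norm_smul, Real.norm_of_nonneg hc0.le]
    simp only [c]
    field_simp
  refine ⟨p + c • (z - p), ⟨?_, ?_⟩, ?_⟩
  · rw [add_closedBall_eq hK hc hne, mem_ofPred_eq, hdist]
    linarith [show ‖z - p‖ ≤ δ from hzδ]
  · rw [add_closedBall_eq hK hc hne, mem_ofPred_eq, hdist, not_le]
    linarith
  · rw [moveTowards, hdist, hproj, add_sub_cancel_left, smul_smul]
    have : a / (‖z - p‖ + a) * c = a / ‖z - p‖ := by simp only [c]; field_simp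
    rw [this]
    module

end MetricProj

theorem measure_image_le_of_lipschitzOnWith_one {F : Type*} [NormedAddCommGroup F]
    [NormedSpace ℝ F] [FiniteDimensional ℝ F] [MeasurableSpace F] [BorelSpace F]
    (μ : Measure F) [μ.IsAddHaarMeasure] {f : F → F} {s : Set F} (hf : LipschitzOnWith 1 f s) :
    μ (f '' s) ≤ μ s := by
  rw [μ.isAddLeftInvariant_eq_smul μH[Module.finrank ℝ F], Measure.smul_apply,
    Measure.smul_apply]
  gcongr _ • ?_
  simpa using hf.hausdorffMeasure_image_le (Nat.cast_nonneg (Module.finrank ℝ F))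

def outerParallelVolume {E : Type*} [SeminormedAddCommGroup E] [MeasurableSpace E]
    (μ : Measure E) (K : Set E) (t : ℝ) : ℝ :=
  μ.real (K + closedBall 0 t) - μ.real K

section ParallelVolume

variable {E : Type*} [NormedAddCommGroup E] [InnerProductSpace ℝ E] [FiniteDimensional ℝ E]
  [MeasurableSpace E] [BorelSpace E] {μ : Measure E} [μ.IsAddHaarMeasure] {K : Set E}

theorem measure_add_closedBall_diff_le (hK : IsComplete K) (hc : Convex ℝ K) {a : ℝ}
    (ha : 0 ≤ a) (δ : ℝ) :
    μ ((K + closedBall 0 δ) \ K) ≤ μ ((K + closedBall 0 (a + δ)) \ (K + closedBall 0 a)) := by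
  rcases K.eq_empty_or_nonempty with rfl | hne
  · simp
  refine (measure_mono (add_closedBall_diff_subset_image_moveTowards hK hc hne ha δ)).trans
    (measure_image_le_of_lipschitzOnWith_one μ
      ((lipschitzOnWith_moveTowards hK hc hne ha).mono ?_))
  rintro x ⟨-, hx⟩
  rw [add_closedBall_eq hK hc hne, mem_ofPred_eq, not_le] at hx
  exact hx.le

theorem nonnegSuperadditive_outerParallelVolume (hK : IsCompact K) (hc : Convex ℝ K) :
    NonnegSuperadditive (outerParallelVolume μ K) := by
  have hfin (r : ℝ) : μ (K + closedBall 0 r) ≠ ∞ :=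
    (hK.add (isCompact_closedBall 0 r)).measure_lt_top.ne
  have hmeas (r : ℝ) : MeasurableSet (K + closedBall (0 : E) r) :=
    (hK.add (isCompact_closedBall 0 r)).isClosed.measurableSet
  have hKsub {r : ℝ} (hr : 0 ≤ r) : K ⊆ K + closedBall (0 : E) r :=
    subset_add_left K (mem_closedBall_self hr)
  refine ⟨fun t ht => sub_nonneg.2 (measureReal_mono (hKsub ht) (hfin t)), fun a b ha hb => ?_⟩
  have key : μ.real ((K + closedBall 0 b) \ K) ≤
      μ.real ((K + closedBall 0 (a + b)) \ (K + closedBall 0 a)) :=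
    ENNReal.toReal_mono (measure_ne_top_of_subset sdiff_subset (hfin _))
      (measure_add_closedBall_diff_le hK.isComplete hc ha b)
  rw [measureReal_sdiff (hKsub hb) hK.isClosed.measurableSet (hfin b),
    measureReal_sdiff (add_subset_add_left (closedBall_subset_closedBall (by linarith)))
      (hmeas a) (hfin _)] at key
  unfold outerParallelVolume
  linarith

end ParallelVolume

section LevelSets

variable {E : Type*} [MeasurableSpace E] {μ : Measure E}

theorem Antitone.measurable_measure {K : ℝ → Set E} (hK : Antitone K) :
    Measurable fun s => μ (K s) :=
  Antitone.measurable fun _ _ hss' => measure_mono (hK hss')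

variable [SeminormedAddCommGroup E]

theorem lintegral_measure_ne_top_of_add_closedBall {α : Type*} [MeasurableSpace α]
    {ν : Measure α} {K : α → Set E} {t : ℝ} (ht : 0 ≤ t)
    (hfin : ∫⁻ a, μ (K a + closedBall 0 t) ∂ν ≠ ∞) : ∫⁻ a, μ (K a) ∂ν ≠ ∞ :=
  ne_top_of_le_ne_top hfin
    (lintegral_mono fun _ => measure_mono (subset_add_left _ (mem_closedBall_self ht)))

variable {ν : Measure ℝ} {K : ℝ → Set E}

theorem Antitone.measurable_measure_add_closedBall (hK : Antitone K) (r : ℝ) :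
    Measurable fun s => μ (K s + closedBall 0 r) :=
  Antitone.measurable fun _ _ hss' => measure_mono (add_subset_add_right (hK hss'))

theorem Antitone.measurable_outerParallelVolume (hK : Antitone K) (t : ℝ) :
    Measurable fun s => outerParallelVolume μ (K s) t :=
  (hK.measurable_measure_add_closedBall t).ennreal_toReal.sub hK.measurable_measure.ennreal_toReal

theorem Antitone.integrable_outerParallelVolume (hK : Antitone K) {t : ℝ} (ht : 0 ≤ t)
    (hfin : ∫⁻ s, μ (K s + closedBall 0 t) ∂ν ≠ ∞) :
    Integrable (fun s => outerParallelVolume μ (K s) t) ν :=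
  (integrable_toReal_of_lintegral_ne_top (hK.measurable_measure_add_closedBall t).aemeasurable
    hfin).sub (integrable_toReal_of_lintegral_ne_top hK.measurable_measure.aemeasurable
      (lintegral_measure_ne_top_of_add_closedBall ht hfin))

theorem Antitone.integral_outerParallelVolume (hK : Antitone K) {t : ℝ} (ht : 0 ≤ t)
    (hfin : ∫⁻ s, μ (K s + closedBall 0 t) ∂ν ≠ ∞) :
    ∫ s, outerParallelVolume μ (K s) t ∂ν =
      (∫⁻ s, μ (K s + closedBall 0 t) ∂ν).toReal - (∫⁻ s, μ (K s) ∂ν).toReal := by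
  have hmt := (hK.measurable_measure_add_closedBall (μ := μ) t).aemeasurable (μ := ν)
  have hm0 := (hK.measurable_measure (μ := μ)).aemeasurable (μ := ν)
  have hfin0 := lintegral_measure_ne_top_of_add_closedBall ht hfin
  rw [← integral_toReal hmt (ae_lt_top' hmt hfin), ← integral_toReal hm0 (ae_lt_top' hm0 hfin0),
    ← integral_sub (integrable_toReal_of_lintegral_ne_top hmt hfin)
      (integrable_toReal_of_lintegral_ne_top hm0 hfin0)]
  rfl

end LevelSets

theorem stmt3_general {n : ℕ} (f : Euc n → ℝ)
    (hlev : ∀ s : ℝ, 0 < s → IsCompact {x | s ≤ f x} ∧ Convex ℝ {x | s ≤ f x})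
    (F : ℝ → ℝ≥0∞)
    (hF : ∀ t : ℝ, F t =
      ∫⁻ s in Ioi (0 : ℝ), volume ({x | s ≤ f x} + t • closedBall (0 : Euc n) 1))
    (t₀ : ℝ) (ht₀ : 0 < t₀) (hfin : F t₀ < ⊤) :
    ∃ S : ℝ → ℝ,
      (∀ s : ℝ, 0 < s → 0 ≤ S s ∧
        Tendsto (fun t : ℝ =>
            ((volume ({x | s ≤ f x} + t • closedBall (0 : Euc n) 1)).toReal
              - (volume {x | s ≤ f x}).toReal) / t)
          (𝓝[>] (0 : ℝ)) (𝓝 (S s))) ∧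
      IntegrableOn S (Ioi (0 : ℝ)) ∧
      Tendsto (fun t : ℝ => ((F t).toReal - (F 0).toReal) / t) (𝓝[>] (0 : ℝ))
        (𝓝 (∫ s in Ioi (0 : ℝ), S s)) := by
  set K : ℝ → Set (Euc n) := fun s => {x | s ≤ f x}
  have hK : Antitone K := fun _ _ hss' _ hx => hss'.trans hx
  have hgrowth (s : ℝ) (hs : 0 < s) : NonnegSuperadditive (outerParallelVolume volume (K s)) :=
    nonnegSuperadditive_outerParallelVolume (hlev s hs).1 (hlev s hs).2
  have hgrowth_ae : ∀ᵐ s ∂volume.restrict (Ioi 0),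
      NonnegSuperadditive (outerParallelVolume volume (K s)) :=
    ae_restrict_of_forall_mem measurableSet_Ioi hgrowth
  have hFball (t : ℝ) (ht : 0 ≤ t) : F t = ∫⁻ s in Ioi 0, volume (K s + closedBall 0 t) := by
    rw [hF, smul_unitClosedBall_of_nonneg ht]
  have hFfin (t : ℝ) (ht : 0 ≤ t) (htt₀ : t ≤ t₀) :
      ∫⁻ s in Ioi 0, volume (K s + closedBall 0 t) ≠ ⊤ := by
    refine ne_top_of_le_ne_top (hFball t₀ ht₀.le ▸ hfin.ne) (lintegral_mono fun _ => ?_)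
    exact measure_mono (add_subset_add_left (closedBall_subset_closedBall htt₀))
  have hint := hK.integrable_outerParallelVolume ht₀.le (hFfin t₀ ht₀.le le_rfl)
  refine ⟨fun s => initialSlope (outerParallelVolume volume (K s)),
    fun s hs => ⟨(hgrowth s hs).initialSlope_nonneg, ?_⟩,
    integrable_initialSlope hgrowth_ae hK.measurable_outerParallelVolume ht₀ hint, ?_⟩
  · refine (hgrowth s hs).tendsto_initialSlope.congr' ?_
    filter_upwards [self_mem_nhdsWithin] with t (ht : 0 < t)
    rw [smul_unitClosedBall_of_nonneg ht.le]
    rfl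
  · refine (tendsto_integral_div_initialSlope hgrowth_ae hK.measurable_outerParallelVolume ht₀
      hint).congr' ?_
    filter_upwards [Ioc_mem_nhdsGT ht₀] with t ⟨ht, htt₀⟩
    rw [integral_div, hK.integral_outerParallelVolume ht.le (hFfin t ht.le htt₀), hFball t ht.le,
      hFball 0 le_rfl]
    simp

theorem stmt3 {n : ℕ} (hn : 1 ≤ n) (f : Euc n → ℝ) (hf0 : ∀ x, 0 ≤ f x)
    (husc : UpperSemicontinuous f)
    (hlev : ∀ s : ℝ, 0 < s → IsCompact {x | s ≤ f x} ∧ Convex ℝ {x | s ≤ f x})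
    (F : ℝ → ℝ≥0∞)
    (hF : ∀ t : ℝ, F t =
      ∫⁻ s in Ioi (0 : ℝ), volume ({x | s ≤ f x} + t • closedBall (0 : Euc n) 1))
    (t₀ : ℝ) (ht₀ : 0 < t₀) (hfin : F t₀ < ⊤) :
    ∃ S : ℝ → ℝ,
      (∀ s : ℝ, 0 < s → 0 ≤ S s ∧
        Tendsto (fun t : ℝ =>
            ((volume ({x | s ≤ f x} + t • closedBall (0 : Euc n) 1)).toReal
              - (volume {x | s ≤ f x}).toReal) / t)
          (𝓝[>] (0 : ℝ)) (𝓝 (S s))) ∧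
      IntegrableOn S (Ioi (0 : ℝ)) ∧
      Tendsto (fun t : ℝ => ((F t).toReal - (F 0).toReal) / t) (𝓝[>] (0 : ℝ))
        (𝓝 (∫ s in Ioi (0 : ℝ), S s)) :=
  stmt3_general f hlev F hF t₀ ht₀ hfin

end
end

section
/- Let n ≥ 1, let f : ℝⁿ → [0,∞) be upper semicontinuous, and let t ≥ 0. Then for every s > 0, {x ∈ ℝⁿ : sup_{z ∈ tB} f(x − z) ≥ s} = {x : f(x) ≥ s} + tB (Minkowski sum, empty when {f ≥ s} is empty). Consequently, by the layer-cake formula, ∫_{ℝⁿ} sup_{z ∈ tB} f(x − z) dx = ∫₀^∞ vol({f ≥ s} + tB) ds. -/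
/-! The supremum of `f` over the translates `x - K` is attained, since `w ↦ f (x - w)` is upper
semicontinuous on the compact set `K`. Hence `x` lies in the superlevel set `{s ≤ sup}` exactly
when `x - z ∈ {s ≤ f}` for some `z ∈ K`, i.e. `{s ≤ sup} = {s ≤ f} + K`. These sets are closed
(closed plus compact), so the supremum is upper semicontinuous, hence measurable, and the integral
identity is the layer-cake formula. -/

open MeasureTheory Filter Set Metric
open scoped Topology ENNReal Pointwise

noncomputable section

/-- In `ℝ`, the bounded supremum `⨆ w ∈ K, F w` also ranges over the junk value `0` coming from
`w ∉ K`, so it equals the maximum only when that maximum is nonnegative. -/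
theorem Real.biSup_eq_of_isMaxOn {ι : Type*} {F : ι → ℝ} {K : Set ι} {z : ι} (hz : z ∈ K)
    (hmax : IsMaxOn F K z) (hF : 0 ≤ F z) : ⨆ w ∈ K, F w = F z := by
  have hle : ∀ w, ⨆ _ : w ∈ K, F w ≤ F z := fun w => Real.iSup_le (fun hw => hmax hw) hF
  refine le_antisymm (Real.iSup_le hle hF) ?_
  exact le_ciSup_of_le ⟨F z, forall_mem_range.2 hle⟩ z (ciSup_pos (f := fun _ => F z) hz).ge

section SupOverTranslates

variable {E : Type*} [TopologicalSpace E] [AddGroup E] [IsTopologicalAddGroup E]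
  {f : E → ℝ} {K : Set E}

theorem UpperSemicontinuous.exists_biSup_sub_eq (hf : UpperSemicontinuous f)
    (hf0 : ∀ x, 0 ≤ f x) (hK : IsCompact K) (hKne : K.Nonempty) (x : E) :
    ∃ z ∈ K, IsMaxOn (fun w => f (x - w)) K z ∧ ⨆ w ∈ K, f (x - w) = f (x - z) := by
  obtain ⟨z, hz, hmax⟩ :=
    ((hf.comp (continuous_sub_left x)).upperSemicontinuousOn K).exists_isMaxOn hKne hK
  exact ⟨z, hz, hmax, Real.biSup_eq_of_isMaxOn hz hmax (hf0 _)⟩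

theorem UpperSemicontinuous.setOf_le_biSup_sub (hf : UpperSemicontinuous f)
    (hf0 : ∀ x, 0 ≤ f x) (hK : IsCompact K) (hKne : K.Nonempty) (s : ℝ) :
    {x | s ≤ ⨆ z ∈ K, f (x - z)} = {x | s ≤ f x} + K := by
  ext x
  obtain ⟨z, hz, hmax, hsup⟩ := hf.exists_biSup_sub_eq hf0 hK hKne x
  rw [mem_ofPred_eq, hsup]
  constructor
  · exact fun hx => ⟨x - z, hx, z, hz, sub_add_cancel x z⟩
  · rintro ⟨y, hy, w, hw, rfl⟩
    have hw' : f (y + w - w) ≤ f (y + w - z) := hmax hw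
    rw [add_sub_cancel_right] at hw'
    exact le_trans hy hw'

theorem UpperSemicontinuous.biSup_sub (hf : UpperSemicontinuous f) (hf0 : ∀ x, 0 ≤ f x)
    (hK : IsCompact K) (hKne : K.Nonempty) :
    UpperSemicontinuous fun x => ⨆ z ∈ K, f (x - z) :=
  upperSemicontinuous_iff_isClosed_preimage.2 fun s => by
    change IsClosed {x | s ≤ ⨆ z ∈ K, f (x - z)}
    rw [hf.setOf_le_biSup_sub hf0 hK hKne]
    exact (hf.isClosed_preimage s).add_right_of_isCompact hK

theorem UpperSemicontinuous.lintegral_biSup_sub [MeasurableSpace E] [OpensMeasurableSpace E]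
    (μ : Measure E) (hf : UpperSemicontinuous f) (hf0 : ∀ x, 0 ≤ f x) (hK : IsCompact K)
    (hKne : K.Nonempty) :
    ∫⁻ x, ENNReal.ofReal (⨆ z ∈ K, f (x - z)) ∂μ = ∫⁻ s in Ioi 0, μ ({x | s ≤ f x} + K) := by
  have hsup_nonneg : ∀ x, 0 ≤ ⨆ z ∈ K, f (x - z) := fun x =>
    Real.iSup_nonneg fun _ => Real.iSup_nonneg fun _ => hf0 _
  rw [lintegral_eq_lintegral_meas_le μ (ae_of_all _ hsup_nonneg)
    (hf.biSup_sub hf0 hK hKne).measurable.aemeasurable]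
  simp_rw [hf.setOf_le_biSup_sub hf0 hK hKne]

end SupOverTranslates

theorem stmt5_general {n : ℕ} (f : Euc n → ℝ) (hf0 : ∀ x, 0 ≤ f x)
    (husc : UpperSemicontinuous f) (t : ℝ) :
    (∀ s : ℝ, 0 < s →
      {x : Euc n | s ≤ ⨆ z ∈ t • closedBall (0 : Euc n) 1, f (x - z)}
        = {x | s ≤ f x} + t • closedBall (0 : Euc n) 1) ∧
    ∫⁻ x : Euc n, ENNReal.ofReal (⨆ z ∈ t • closedBall (0 : Euc n) 1, f (x - z))
      = ∫⁻ s in Ioi (0 : ℝ), volume ({x | s ≤ f x} + t • closedBall (0 : Euc n) 1) := by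
  have hK : IsCompact (t • closedBall (0 : Euc n) 1) := (isCompact_closedBall 0 1).smul t
  have hKne : (t • closedBall (0 : Euc n) 1).Nonempty :=
    (nonempty_closedBall.2 zero_le_one).smul_set
  exact ⟨fun s _ => husc.setOf_le_biSup_sub hf0 hK hKne s,
    husc.lintegral_biSup_sub volume hf0 hK hKne⟩

theorem stmt5 {n : ℕ} (hn : 1 ≤ n) (f : Euc n → ℝ) (hf0 : ∀ x, 0 ≤ f x)
    (husc : UpperSemicontinuous f) (t : ℝ) (ht : 0 ≤ t) :
    (∀ s : ℝ, 0 < s →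
      {x : Euc n | s ≤ ⨆ z ∈ t • closedBall (0 : Euc n) 1, f (x - z)}
        = {x | s ≤ f x} + t • closedBall (0 : Euc n) 1) ∧
    ∫⁻ x : Euc n, ENNReal.ofReal (⨆ z ∈ t • closedBall (0 : Euc n) 1, f (x - z))
      = ∫⁻ s in Ioi (0 : ℝ), volume ({x | s ≤ f x} + t • closedBall (0 : Euc n) 1) :=
  stmt5_general f hf0 husc t

end
end

section
/- Let n ≥ 1, f ∈ LCₙ, and let T : ℝⁿ → ℝⁿ be an invertible linear map. Then the functional affine surface area satisfies Ω♯(f∘T) = |det T|^{−(n−1)/(n+1)} · Ω♯(f). In particular, if |det T| = 1 then Ω♯(f∘T) = Ω♯(f). -/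
open MeasureTheory Filter Set Metric
open scoped Topology NNReal ENNReal Pointwise RealInnerProductSpace

noncomputable section

/-- `f` is log-concave: `f((1-λ)x + λy) ≥ f(x)^{1-λ} f(y)^λ`. -/
def IsLogConcaveFn {n : ℕ} (f : Euc n → ℝ) : Prop :=
  ∀ x y : Euc n, ∀ a b : ℝ, 0 ≤ a → 0 ≤ b → a + b = 1 →
    (f x) ^ a * (f y) ^ b ≤ f (a • x + b • y)

/-- The class `LCₙ`. -/
structure MemLC {n : ℕ} (f : Euc n → ℝ) : Prop where
  nonneg : ∀ x, 0 ≤ f x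
  usc : UpperSemicontinuous f
  logConcave : IsLogConcaveFn f
  nonzero : ∃ x, 0 < f x
  tendsto_zero : Tendsto f (cocompact (Euc n)) (𝓝 0)
  support_interior : (interior {x | 0 < f x}).Nonempty

/-- `(f ⋆ (t·1_C))(x) = sup_{z ∈ tC} f(x − z)`. -/
def indSup {n : ℕ} (f : Euc n → ℝ) (C : Set (Euc n)) (t : ℝ) (x : Euc n) : ℝ :=
  ⨆ z ∈ t • C, f (x - z)

/-- The first variation `δ(f, 1_C)` exists and equals `a`. -/
def HasVarInd {n : ℕ} (f : Euc n → ℝ) (C : Set (Euc n)) (a : ℝ) : Prop :=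
  Tendsto (fun t : ℝ => ((∫ x, indSup f C t x) - ∫ x, f x) / t)
    (𝓝[>] (0 : ℝ)) (𝓝 a)

/-- The radial function `ρ_Q(u) = max {r ≥ 0 : r u ∈ Q}`. -/
def radialFn {n : ℕ} (Q : Set (Euc n)) (u : Euc n) : ℝ :=
  sSup {r : ℝ | 0 ≤ r ∧ r • u ∈ Q}

/-- A centered star body: compact, `0` in the interior, star-shaped about the origin,
continuous radial function on the sphere, centroid at the origin. -/
structure IsCenteredStarBody {n : ℕ} (Q : Set (Euc n)) : Prop where
  compact : IsCompact Q
  zero_mem_interior : (0 : Euc n) ∈ interior Q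
  starShaped : ∀ x ∈ Q, ∀ r : ℝ, 0 ≤ r → r ≤ 1 → r • x ∈ Q
  radial_continuous : ContinuousOn (radialFn Q) (sphere (0 : Euc n) 1)
  centroid_zero : (∫ x in Q, x) = (0 : Euc n)

/-- The polar set `Q° = {y : ⟪x,y⟫ ≤ 1 for all x ∈ Q}`. -/
def polarSet {n : ℕ} (Q : Set (Euc n)) : Set (Euc n) :=
  {y : Euc n | ∀ x ∈ Q, ⟪x, y⟫ ≤ 1}

/-- The set `A_f = {a · vol(Q)^{1/n} : Q a centered star body with δ(f, 1_{Q°}) = a}`. -/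
def asaSet (n : ℕ) (f : Euc n → ℝ) : Set ℝ :=
  {y : ℝ | ∃ (Q : Set (Euc n)) (a : ℝ), IsCenteredStarBody Q ∧
    HasVarInd f (polarSet Q) a ∧ y = a * (volume Q).toReal ^ ((1 : ℝ) / n)}

/-- The functional affine surface area `Ω♯(f) = n^{1/(n+1)} (inf A_f)^{n/(n+1)}`. -/
def affSA (n : ℕ) (f : Euc n → ℝ) : ℝ :=
  (n : ℝ) ^ ((1 : ℝ) / ((n : ℝ) + 1)) * (sInf (asaSet n f)) ^ ((n : ℝ) / ((n : ℝ) + 1))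

/-! Substituting `x ↦ T x` multiplies every integral by `|det T|⁻¹` and conjugates the
Asplund sums: the variation of `f ∘ T` in direction `1_{T⁻¹ Q°}` is `|det T|⁻¹ δ(f, 1_{Q°})`.
Since `T⁻¹ Q° = (Tᵀ Q)°` and `Tᵀ` maps centered star bodies to centered star bodies with
`vol (Tᵀ Q) = |det T| vol Q`, this gives `A_{f∘T} = |det T|^{1/n - 1} A_f`, and the exponent
`(1/n - 1) · n/(n+1)` is `-(n-1)/(n+1)`. -/

open LinearMap (det adjoint)

theorem Real.mul_rpow_of_pos_left {c : ℝ} (hc : 0 < c) (x : ℝ) {p : ℝ} (hp : p ≠ 0) :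
    (c * x) ^ p = c ^ p * x ^ p := by
  rcases lt_trichotomy x 0 with hx | rfl | hx
  · rw [Real.rpow_def_of_neg (mul_neg_of_pos_of_neg hc hx), Real.rpow_def_of_neg hx,
      Real.rpow_def_of_pos hc, Real.log_mul hc.ne' hx.ne, add_mul, Real.exp_add]
    ring
  · rw [mul_zero, Real.zero_rpow hp, mul_zero]
  · exact Real.mul_rpow hc.le hx.le

theorem biSup_image_equiv {α β γ : Type*} [SupSet γ] (e : α ≃ β) (s : Set α) (g : β → γ) :
    ⨆ z ∈ e '' s, g z = ⨆ w ∈ s, g (e w) := by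
  rw [← e.iSup_comp]
  simp only [e.injective.mem_set_image]

theorem LinearEquiv.abs_det_pos {M : Type*} [AddCommGroup M] [Module ℝ M] (T : M ≃ₗ[ℝ] M) :
    0 < |det (T : M →ₗ[ℝ] M)| :=
  abs_pos.2 (LinearEquiv.isUnit_det' T).ne_zero

section LinearChangeOfVariables

variable {E F : Type*} [NormedAddCommGroup E] [NormedSpace ℝ E] [MeasurableSpace E]
  [BorelSpace E] [FiniteDimensional ℝ E] (μ : Measure E) [μ.IsAddHaarMeasure]
  [NormedAddCommGroup F] [NormedSpace ℝ F]

theorem setIntegral_image_linearEquiv (S : E ≃ₗ[ℝ] E) (s : Set E) (g : E → F) :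
    ∫ x in S '' s, g x ∂μ = |det (S : E →ₗ[ℝ] E)| • ∫ x in s, g (S x) ∂μ := by
  have hdet : det (S : E →ₗ[ℝ] E) ≠ 0 := abs_ne_zero.1 S.abs_det_pos.ne'
  let e : E ≃ᵐ E := S.toContinuousLinearEquiv.toHomeomorph.toMeasurableEquiv
  have hmap : μ.map e = ENNReal.ofReal |(det (S : E →ₗ[ℝ] E))⁻¹| • μ :=
    μ.map_linearMap_addHaar_eq_smul_addHaar hdet
  have key := setIntegral_map_equiv (μ := μ) e g (S '' s)
  rw [hmap, Measure.restrict_smul, integral_smul_measure, ENNReal.toReal_ofReal (abs_nonneg _),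
    abs_inv, show e ⁻¹' (S '' s) = s from S.toEquiv.preimage_image s] at key
  exact (inv_smul_eq_iff₀ (abs_ne_zero.2 hdet)).1 key

theorem integral_comp_linearEquiv (T : E ≃ₗ[ℝ] E) (g : E → F) :
    ∫ x, g (T x) ∂μ = |det (T : E →ₗ[ℝ] E)|⁻¹ • ∫ x, g x ∂μ := by
  have h := setIntegral_image_linearEquiv μ T univ g
  rw [image_univ_of_surjective T.surjective, Measure.restrict_univ] at h
  rw [h, inv_smul_smul₀ T.abs_det_pos.ne']

theorem setIntegral_id_image_linearEquiv (S : E ≃ₗ[ℝ] E) (s : Set E) :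
    ∫ x in S '' s, x ∂μ = |det (S : E →ₗ[ℝ] E)| • S (∫ x in s, x ∂μ) := by
  rw [setIntegral_image_linearEquiv]
  exact congrArg _ (S.toContinuousLinearEquiv.integral_comp_comm _)

end LinearChangeOfVariables

section Adjoint

variable {E : Type*} [NormedAddCommGroup E] [InnerProductSpace ℝ E] [FiniteDimensional ℝ E]

theorem LinearMap.det_adjoint (A : E →ₗ[ℝ] E) : det (adjoint A) = det A := by
  let b := (stdOrthonormalBasis ℝ E).toBasis
  rw [← LinearMap.det_toMatrix b, ← LinearMap.det_toMatrix b A, LinearMap.toMatrix_adjoint,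
    Matrix.det_conjTranspose, star_trivial]

def LinearEquiv.adjoint (T : E ≃ₗ[ℝ] E) : E ≃ₗ[ℝ] E :=
  (LinearMap.adjoint (T : E →ₗ[ℝ] E)).equivOfDetNeZero
    (by rw [LinearMap.det_adjoint]; exact (LinearEquiv.isUnit_det' T).ne_zero)

theorem LinearEquiv.coe_adjoint (T : E ≃ₗ[ℝ] E) :
    (T.adjoint : E →ₗ[ℝ] E) = LinearMap.adjoint (T : E →ₗ[ℝ] E) :=
  rfl

theorem LinearEquiv.inner_adjoint_apply_left (T : E ≃ₗ[ℝ] E) (x y : E) :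
    ⟪T.adjoint x, y⟫ = ⟪x, T y⟫ := by
  rw [← LinearEquiv.coe_coe, coe_adjoint, LinearMap.adjoint_inner_left]
  rfl

theorem LinearEquiv.det_adjoint (T : E ≃ₗ[ℝ] E) :
    det (T.adjoint : E →ₗ[ℝ] E) = det (T : E →ₗ[ℝ] E) := by
  rw [coe_adjoint, LinearMap.det_adjoint]

end Adjoint

section StarBodies

variable {n : ℕ}

theorem radialFn_image (S : Euc n ≃ₗ[ℝ] Euc n) (Q : Set (Euc n)) (u : Euc n) :
    radialFn (S '' Q) u = radialFn Q (S.symm u) := by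
  simp only [radialFn, S.image_eq_preimage_symm, mem_preimage, map_smul]

theorem radialFn_smul (Q : Set (Euc n)) (v : Euc n) {c : ℝ} (hc : 0 < c) :
    radialFn Q (c • v) = c⁻¹ * radialFn Q v := by
  unfold radialFn
  have h : {r : ℝ | 0 ≤ r ∧ r • c • v ∈ Q} = c⁻¹ • {r : ℝ | 0 ≤ r ∧ r • v ∈ Q} := by
    ext r
    simp only [mem_ofPred_eq, Set.mem_smul_set, smul_eq_mul]
    constructor
    · rintro ⟨hr, hmem⟩
      refine ⟨c * r, ⟨by positivity, ?_⟩, by field_simp⟩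
      rwa [smul_smul, mul_comm r c] at hmem
    · rintro ⟨s, ⟨hs, hmem⟩, rfl⟩
      refine ⟨by positivity, ?_⟩
      rwa [smul_smul, show c⁻¹ * s * c = s by field_simp]
  rw [h, Real.sSup_smul_of_nonneg (by positivity), smul_eq_mul]

theorem radialFn_eq_inv_norm_mul (Q : Set (Euc n)) {v : Euc n} (hv : v ≠ 0) :
    radialFn Q v = ‖v‖⁻¹ * radialFn Q (‖v‖⁻¹ • v) := by
  have hpos : 0 < ‖v‖ := norm_pos_iff.2 hv
  conv_lhs => rw [← smul_inv_smul₀ hpos.ne' v]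
  rw [radialFn_smul Q _ hpos]

theorem continuousOn_radialFn_image (S : Euc n ≃ₗ[ℝ] Euc n) {Q : Set (Euc n)}
    (hQ : ContinuousOn (radialFn Q) (sphere 0 1)) :
    ContinuousOn (radialFn (S '' Q)) (sphere 0 1) := by
  have hne : ∀ u ∈ sphere (0 : Euc n) 1, S.symm u ≠ 0 := fun u hu =>
    (map_ne_zero_iff S.symm S.symm.injective).2 (ne_zero_of_mem_unit_sphere ⟨u, hu⟩)
  have hS : Continuous S.symm := S.symm.toContinuousLinearEquiv.continuous
  have hinv : ContinuousOn (fun u => ‖S.symm u‖⁻¹) (sphere 0 1) :=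
    hS.norm.continuousOn.inv₀ fun u hu => norm_ne_zero_iff.2 (hne u hu)
  have hdir : MapsTo (fun u => ‖S.symm u‖⁻¹ • S.symm u) (sphere 0 1) (sphere 0 1) :=
    fun u hu => by simp [norm_smul, hne u hu]
  refine (hinv.mul (hQ.comp (hinv.smul hS.continuousOn) hdir)).congr fun u hu => ?_
  rw [radialFn_image, radialFn_eq_inv_norm_mul Q (hne u hu)]
  rfl

theorem IsCenteredStarBody.image {Q : Set (Euc n)} (hQ : IsCenteredStarBody Q)
    (S : Euc n ≃ₗ[ℝ] Euc n) : IsCenteredStarBody (S '' Q) where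
  compact := hQ.compact.image S.toContinuousLinearEquiv.continuous
  zero_mem_interior := by
    rw [show ⇑S = S.toContinuousLinearEquiv.toHomeomorph from rfl, ← Homeomorph.image_interior]
    exact ⟨0, hQ.zero_mem_interior, map_zero S⟩
  starShaped := by
    rintro _ ⟨x, hx, rfl⟩ r hr hr1
    exact ⟨r • x, hQ.starShaped x hx r hr hr1, map_smul S r x⟩
  radial_continuous := continuousOn_radialFn_image S hQ.radial_continuous
  centroid_zero := by
    rw [setIntegral_id_image_linearEquiv, hQ.centroid_zero, map_zero, smul_zero]

end StarBodies

section AffineInvariance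

variable {n : ℕ}

theorem polarSet_image_adjoint (T : Euc n ≃ₗ[ℝ] Euc n) (Q : Set (Euc n)) :
    polarSet (T.adjoint '' Q) = T.symm '' polarSet Q := by
  ext y
  simp only [polarSet, forall_mem_image, T.inner_adjoint_apply_left,
    T.symm.image_eq_preimage_symm, mem_preimage, mem_ofPred_eq, LinearEquiv.symm_symm]

theorem indSup_comp (f : Euc n → ℝ) (T : Euc n ≃ₗ[ℝ] Euc n) (C : Set (Euc n)) (t : ℝ)
    (x : Euc n) : indSup (fun y => f (T y)) (T.symm '' C) t x = indSup f C t (T x) := by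
  rw [indSup, indSup, ← image_smul_comm _ _ _ (map_smul T.symm t)]
  refine (biSup_image_equiv T.symm.toEquiv _ _).trans ?_
  simp only [LinearEquiv.coe_toEquiv, map_sub, LinearEquiv.apply_symm_apply]

theorem HasVarInd.comp {f : Euc n → ℝ} {C : Set (Euc n)} {a : ℝ} (h : HasVarInd f C a)
    (T : Euc n ≃ₗ[ℝ] Euc n) :
    HasVarInd (fun x => f (T x)) (T.symm '' C) (|det (T : Euc n →ₗ[ℝ] Euc n)|⁻¹ * a) := by
  refine (h.const_mul _).congr fun t => ?_
  simp only [indSup_comp, integral_comp_linearEquiv volume T (indSup f C t),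
    integral_comp_linearEquiv volume T f, smul_eq_mul]
  ring

theorem mem_asaSet_comp {f : Euc n → ℝ} {y : ℝ} (hy : y ∈ asaSet n f)
    (T : Euc n ≃ₗ[ℝ] Euc n) :
    |det (T : Euc n →ₗ[ℝ] Euc n)| ^ ((1 : ℝ) / n - 1) * y ∈ asaSet n (fun x => f (T x)) := by
  obtain ⟨Q, a, hQ, hvar, rfl⟩ := hy
  have hd := T.abs_det_pos
  refine ⟨T.adjoint '' Q, _, hQ.image T.adjoint, polarSet_image_adjoint T Q ▸ hvar.comp T, ?_⟩
  have hvol : (volume (T.adjoint '' Q)).toReal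
      = |det (T : Euc n →ₗ[ℝ] Euc n)| * (volume Q).toReal := by
    rw [← LinearEquiv.coe_coe, Measure.addHaar_image_linearMap, T.det_adjoint, ENNReal.toReal_mul,
      ENNReal.toReal_ofReal (abs_nonneg _)]
  rw [hvol, Real.mul_rpow hd.le ENNReal.toReal_nonneg, Real.rpow_sub hd, Real.rpow_one]
  field_simp

theorem asaSet_comp (f : Euc n → ℝ) (T : Euc n ≃ₗ[ℝ] Euc n) :
    asaSet n (fun x => f (T x))
      = |det (T : Euc n →ₗ[ℝ] Euc n)| ^ ((1 : ℝ) / n - 1) • asaSet n f := by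
  have hc : |det (T : Euc n →ₗ[ℝ] Euc n)| ^ ((1 : ℝ) / n - 1) ≠ 0 :=
    (Real.rpow_pos_of_pos T.abs_det_pos _).ne'
  refine Subset.antisymm (fun y hy => ?_) ?_
  · have h := mem_asaSet_comp hy T.symm
    simp only [LinearEquiv.apply_symm_apply, LinearEquiv.det_coe_symm, abs_inv,
      Real.inv_rpow (abs_nonneg _)] at h
    exact ⟨_, h, smul_inv_smul₀ hc y⟩
  · rintro _ ⟨y, hy, rfl⟩
    exact mem_asaSet_comp hy T

theorem affSA_comp (hn : n ≠ 0) (f : Euc n → ℝ) (T : Euc n ≃ₗ[ℝ] Euc n) :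
    affSA n (fun x => f (T x))
      = |det (T : Euc n →ₗ[ℝ] Euc n)| ^ (-(((n : ℝ) - 1) / ((n : ℝ) + 1))) * affSA n f := by
  have hd := T.abs_det_pos
  have hn' : (n : ℝ) ≠ 0 := Nat.cast_ne_zero.2 hn
  have hexp : ((1 : ℝ) / n - 1) * (n / (n + 1)) = -((n - 1) / (n + 1)) := by
    field_simp
    ring
  rw [affSA, affSA, asaSet_comp, Real.sInf_smul_of_nonneg (by positivity), smul_eq_mul,
    Real.mul_rpow_of_pos_left (by positivity) _ (by positivity), ← Real.rpow_mul hd.le, hexp]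
  ring

end AffineInvariance

theorem stmt8_general {n : ℕ} (hn : 1 ≤ n) (f : Euc n → ℝ)
    (T : Euc n ≃ₗ[ℝ] Euc n) :
    affSA n (fun x => f (T x))
        = |LinearMap.det (T : Euc n →ₗ[ℝ] Euc n)| ^ (-(((n : ℝ) - 1) / ((n : ℝ) + 1)))
          * affSA n f ∧
      (|LinearMap.det (T : Euc n →ₗ[ℝ] Euc n)| = 1 →
        affSA n (fun x => f (T x)) = affSA n f) := by
  have h := affSA_comp (Nat.one_le_iff_ne_zero.1 hn) f T
  exact ⟨h, fun hdet => by rw [h, hdet, Real.one_rpow, one_mul]⟩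

theorem stmt8 {n : ℕ} (hn : 1 ≤ n) (f : Euc n → ℝ) (hf : MemLC f)
    (T : Euc n ≃ₗ[ℝ] Euc n) :
    affSA n (fun x => f (T x))
        = |LinearMap.det (T : Euc n →ₗ[ℝ] Euc n)| ^ (-(((n : ℝ) - 1) / ((n : ℝ) + 1)))
          * affSA n f ∧
      (|LinearMap.det (T : Euc n →ₗ[ℝ] Euc n)| = 1 →
        affSA n (fun x => f (T x)) = affSA n f) :=
  stmt8_general hn f T

end
end

section
/- Let n ≥ 1 and let Q be a convex body in ℝⁿ containing the origin in its interior. Then (n·vol(Q))^{1/n} · ∫_{Sⁿ⁻¹} h_{Q°}(v) dσ(v) ≥ (n·ωₙ)^{(n+1)/n}, where Q° is the polar body of Q and h_{Q°} is its support function. Equality holds if and only if Q is a Euclidean ball centered at the origin. -/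
/-!
Since the origin is an interior point of `Q`, the support function of `Q°` is the gauge `g` of
`Q` (separate a point outside `t • Q` from it by Hahn–Banach), and in polar coordinates
`n · vol Q = ∫ g⁻ⁿ dσ`. Jensen's inequality for the strictly convex `t ↦ t⁻ⁿ` and the average
of `g` over the sphere gives `σ(Sⁿ⁻¹)ⁿ⁺¹ ≤ (∫ g⁻ⁿ dσ) (∫ g dσ)ⁿ`, whose `n`-th root is the claim.
Equality in Jensen forces the continuous `g` to be constant on the sphere, i.e. `Q` is a ball.
-/

open MeasureTheory Filter Set Metric
open scoped Topology ENNReal RealInnerProductSpace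

noncomputable section

def suppFn {n : ℕ} (K : Set (Euc n)) (x : Euc n) : ℝ :=
  sSup ((fun y => ⟪x, y⟫) '' K)

open scoped Pointwise

lemma rpow_succ_div_eq_pow_succ_rpow {S : ℝ} {n : ℕ} (hS : 0 ≤ S) :
    S ^ (((n : ℝ) + 1) / n) = (S ^ (n + 1)) ^ ((1 : ℝ) / n) := by
  rw [← Real.rpow_natCast, ← Real.rpow_mul hS]
  push_cast
  ring_nf

lemma rpow_one_div_mul_eq_mul_pow_rpow {J I : ℝ} {n : ℕ} (hn : n ≠ 0) (hJ : 0 ≤ J) (hI : 0 ≤ I) :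
    J ^ ((1 : ℝ) / n) * I = (J * I ^ n) ^ ((1 : ℝ) / n) := by
  rw [Real.mul_rpow hJ (pow_nonneg hI n), one_div, Real.pow_rpow_inv_natCast hI hn]

lemma rpow_succ_div_le_iff {S I J : ℝ} {n : ℕ} (hn : n ≠ 0) (hS : 0 ≤ S) (hI : 0 ≤ I)
    (hJ : 0 ≤ J) : S ^ (((n : ℝ) + 1) / n) ≤ J ^ ((1 : ℝ) / n) * I ↔ S ^ (n + 1) ≤ J * I ^ n := by
  rw [rpow_succ_div_eq_pow_succ_rpow hS, rpow_one_div_mul_eq_mul_pow_rpow hn hJ hI,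
    Real.rpow_le_rpow_iff (by positivity) (by positivity) (by positivity)]

lemma rpow_succ_div_eq_iff {S I J : ℝ} {n : ℕ} (hn : n ≠ 0) (hS : 0 ≤ S) (hI : 0 ≤ I)
    (hJ : 0 ≤ J) : S ^ (((n : ℝ) + 1) / n) = J ^ ((1 : ℝ) / n) * I ↔ S ^ (n + 1) = J * I ^ n := by
  rw [rpow_succ_div_eq_pow_succ_rpow hS, rpow_one_div_mul_eq_mul_pow_rpow hn hJ hI,
    Real.rpow_left_inj (by positivity) (by positivity) (by positivity)]

lemma zpow_neg_lt_iff_pow_succ_lt {S I J : ℝ} (n : ℕ) (hS : 0 < S) (hI : 0 < I) :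
    (S⁻¹ * I) ^ (-(n : ℤ)) < S⁻¹ * J ↔ S ^ (n + 1) < J * I ^ n := by
  rw [zpow_neg, zpow_natCast, mul_pow, inv_pow, mul_inv, inv_inv, mul_comm S⁻¹ J,
    ← div_eq_mul_inv, ← div_eq_mul_inv, div_lt_div_iff₀ (pow_pos hI n) hS, pow_succ]

lemma zpow_neg_le_iff_pow_succ_le {S I J : ℝ} (n : ℕ) (hS : 0 < S) (hI : 0 < I) :
    (S⁻¹ * I) ^ (-(n : ℤ)) ≤ S⁻¹ * J ↔ S ^ (n + 1) ≤ J * I ^ n := by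
  rw [zpow_neg, zpow_natCast, mul_pow, inv_pow, mul_inv, inv_inv, mul_comm S⁻¹ J,
    ← div_eq_mul_inv, ← div_eq_mul_inv, div_le_div_iff₀ (pow_pos hI n) hS, pow_succ]

lemma continuousOn_zpow_Ici {c : ℝ} (hc : 0 < c) (m : ℤ) :
    ContinuousOn (fun t : ℝ => t ^ m) (Ici c) :=
  (continuousOn_zpow₀ m).mono fun _ ht => (hc.trans_le ht).ne'

section Jensen

variable {α : Type*} [MeasurableSpace α] {μ : Measure α} {f : α → ℝ} {c : ℝ}

lemma integral_zpow_neg_mul_integral_pow_of_ae_eq_const {n : ℕ} {a : ℝ} (ha : a ≠ 0)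
    (hf : f =ᵐ[μ] fun _ => a) :
    (∫ x, f x ^ (-(n : ℤ)) ∂μ) * (∫ x, f x ∂μ) ^ n = μ.real univ ^ (n + 1) := by
  have hfn : (fun x => f x ^ (-(n : ℤ))) =ᵐ[μ] fun _ => a ^ (-(n : ℤ)) :=
    hf.mono fun x hx => by simp only [hx]
  rw [integral_congr_ae hfn, integral_congr_ae hf, integral_const, integral_const,
    smul_eq_mul, smul_eq_mul, zpow_neg, zpow_natCast, mul_pow, pow_succ]
  field_simp

variable [IsFiniteMeasure μ] [NeZero μ] (n : ℕ) (hc : 0 < c) (hfc : ∀ᵐ x ∂μ, c ≤ f x)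
  (hf : Integrable f μ) (hfn : Integrable (fun x => f x ^ (-(n : ℤ))) μ)

include hc hfc hf in
lemma integral_pos_of_ae_le : 0 < ∫ x, f x ∂μ := by
  have := integral_mono_ae (integrable_const c) hf hfc
  rw [integral_const, smul_eq_mul] at this
  exact (mul_pos measureReal_univ_pos hc).trans_le this

include hc hfc hf hfn

lemma measureReal_univ_pow_succ_le_integral_zpow_neg_mul :
    μ.real univ ^ (n + 1) ≤ (∫ x, f x ^ (-(n : ℤ)) ∂μ) * (∫ x, f x ∂μ) ^ n := by
  have hjensen := ConvexOn.map_average_le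
    ((convexOn_zpow (-(n : ℤ))).subset (Ici_subset_Ioi.2 hc) (convex_Ici c))
    (continuousOn_zpow_Ici hc _) isClosed_Ici hfc hf hfn
  rwa [average_eq, average_eq, smul_eq_mul, smul_eq_mul, zpow_neg_le_iff_pow_succ_le n
    measureReal_univ_pos (integral_pos_of_ae_le hc hfc hf)] at hjensen

lemma measureReal_univ_pow_succ_eq_integral_zpow_neg_mul_iff (hn : n ≠ 0) :
    μ.real univ ^ (n + 1) = (∫ x, f x ^ (-(n : ℤ)) ∂μ) * (∫ x, f x ∂μ) ^ n ↔
      ∃ a, f =ᵐ[μ] fun _ => a := by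
  have hS : 0 < μ.real univ := measureReal_univ_pos
  have hI : 0 < ∫ x, f x ∂μ := integral_pos_of_ae_le hc hfc hf
  constructor
  · intro heq
    have hconv : StrictConvexOn ℝ (Ici c) fun t : ℝ => t ^ (-(n : ℤ)) :=
      (strictConvexOn_zpow (by omega) (by omega)).subset (Ici_subset_Ioi.2 hc) (convex_Ici c)
    refine ⟨_, (hconv.ae_eq_const_or_map_average_lt (continuousOn_zpow_Ici hc _) isClosed_Ici
      hfc hf hfn).resolve_right fun hlt => ?_⟩
    rw [average_eq, average_eq, smul_eq_mul, smul_eq_mul,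
      zpow_neg_lt_iff_pow_succ_lt n hS hI] at hlt
    exact hlt.ne heq
  · rintro ⟨a, ha⟩
    obtain ⟨x, hcx, hxa⟩ := (hfc.and ha).exists
    exact (integral_zpow_neg_mul_integral_pow_of_ae_eq_const
      (hc.trans_le (hcx.trans_eq hxa)).ne' ha).symm

end Jensen

section JensenContinuous

variable {X : Type*} [TopologicalSpace X] [CompactSpace X] [MeasurableSpace X]
  [OpensMeasurableSpace X] {μ : Measure X} [IsFiniteMeasure μ] [NeZero μ] {f : X → ℝ}
  (n : ℕ) (hf : Continuous f) (hpos : ∀ x, 0 < f x)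
include hf hpos

lemma exists_pos_le_and_integrable_zpow :
    ∃ c, 0 < c ∧ (∀ᵐ x ∂μ, c ≤ f x) ∧ Integrable f μ ∧
      Integrable (fun x => f x ^ (-(n : ℤ))) μ := by
  have := Measure.nonempty_of_neZero μ
  obtain ⟨x₀, -, hx₀⟩ := isCompact_univ.exists_isMinOn univ_nonempty hf.continuousOn
  exact ⟨f x₀, hpos x₀, ae_of_all _ fun x => hx₀ (mem_univ x),
    hf.integrable_of_hasCompactSupport (.of_compactSpace f),
    (hf.zpow₀ _ fun x => .inl (hpos x).ne').integrable_of_hasCompactSupport (.of_compactSpace _)⟩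

lemma measureReal_univ_pow_succ_le_integral_zpow_neg_mul_of_continuous :
    μ.real univ ^ (n + 1) ≤ (∫ x, f x ^ (-(n : ℤ)) ∂μ) * (∫ x, f x ∂μ) ^ n :=
  have ⟨_, hc, hfc, hfi, hfni⟩ := exists_pos_le_and_integrable_zpow n hf hpos (μ := μ)
  measureReal_univ_pow_succ_le_integral_zpow_neg_mul n hc hfc hfi hfni

lemma measureReal_univ_pow_succ_eq_integral_zpow_neg_mul_iff_of_continuous [μ.IsOpenPosMeasure]
    (hn : n ≠ 0) :
    μ.real univ ^ (n + 1) = (∫ x, f x ^ (-(n : ℤ)) ∂μ) * (∫ x, f x ∂μ) ^ n ↔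
      ∃ a, f = fun _ => a := by
  obtain ⟨_, hc, hfc, hfi, hfni⟩ := exists_pos_le_and_integrable_zpow n hf hpos (μ := μ)
  simp only [measureReal_univ_pow_succ_eq_integral_zpow_neg_mul_iff n hc hfc hfi hfni hn,
    hf.ae_eq_iff_eq μ continuous_const]

end JensenContinuous

namespace MeasureTheory.Measure

variable {E : Type*} [NormedAddCommGroup E] [NormedSpace ℝ E] [MeasurableSpace E] [BorelSpace E]
  [FiniteDimensional ℝ E] [Nontrivial E] (μ : Measure E) [μ.IsAddHaarMeasure]

lemma measure_eq_lintegral_toSphere_volumeIoiPow {s : Set E} (hs : MeasurableSet s) :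
    μ s = ∫⁻ v, volumeIoiPow (Module.finrank ℝ E - 1) {r | (r : ℝ) • (v : E) ∈ s} ∂μ.toSphere := by
  have hB : MeasurableSet {p : sphere (0 : E) 1 × Ioi (0 : ℝ) | (p.2 : ℝ) • (p.1 : E) ∈ s} :=
    hs.preimage (by fun_prop)
  have := Measure.prod_apply (μ := μ.toSphere) (ν := volumeIoiPow (Module.finrank ℝ E - 1)) hB
  rw [← (μ.measurePreserving_homeomorphUnitSphereProd).measure_preimage
    hB.nullMeasurableSet, comap_subtype_coe_apply (measurableSet_singleton 0).compl] at this
  refine Eq.trans ?_ this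
  have hpre : Subtype.val '' (homeomorphUnitSphereProd E ⁻¹'
      {p : sphere (0 : E) 1 × Ioi (0 : ℝ) | (p.2 : ℝ) • (p.1 : E) ∈ s}) = s \ {0} := by
    ext x
    constructor
    · rintro ⟨x, hx, rfl⟩
      refine ⟨?_, x.2⟩
      simpa [smul_inv_smul₀ (norm_ne_zero_iff.2 x.2)] using hx
    · intro hx
      refine ⟨⟨x, hx.2⟩, ?_, rfl⟩
      simp [smul_inv_smul₀ (norm_ne_zero_iff.2 hx.2), hx.1]
  rw [hpre, measure_sdiff_null (measure_singleton 0)]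

lemma volumeIoiPow_Iic (m : ℕ) (x : Ioi (0 : ℝ)) :
    volumeIoiPow m (Iic x) = ENNReal.ofReal (x.1 ^ (m + 1) / (m + 1)) := by
  have hx : volumeIoiPow m {x} = 0 := withDensity_absolutelyContinuous _ _ <| by
    rw [comap_subtype_coe_apply measurableSet_Ioi, image_singleton, measure_singleton]
  rw [← measure_congr (Iio_ae_eq_Iic' hx), volumeIoiPow_apply_Iio]

lemma measure_eq_lintegral_toSphere_of_radial {s : Set E} (hs : MeasurableSet s)
    {ρ : sphere (0 : E) 1 → ℝ} (hρ : ∀ v, 0 < ρ v)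
    (hsρ : ∀ (v : sphere (0 : E) 1) (r : ℝ), 0 < r → (r • (v : E) ∈ s ↔ r ≤ ρ v)) :
    μ s = ∫⁻ v, ENNReal.ofReal (ρ v ^ Module.finrank ℝ E / Module.finrank ℝ E) ∂μ.toSphere := by
  rw [measure_eq_lintegral_toSphere_volumeIoiPow μ hs]
  refine lintegral_congr fun v => ?_
  have hset : {r : Ioi (0 : ℝ) | (r : ℝ) • (v : E) ∈ s} = Iic ⟨ρ v, hρ v⟩ := by
    ext r
    exact hsρ v r r.2
  rw [hset, volumeIoiPow_Iic, ← Nat.cast_add_one, Nat.sub_add_cancel Module.finrank_pos]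

end MeasureTheory.Measure

section Gauge

variable {E : Type*} [NormedAddCommGroup E] [NormedSpace ℝ E] {Q : Set E}

lemma gauge_pos_of_ne_zero (hcpt : IsCompact Q) (hQ : Q ∈ 𝓝 0) {x : E} (hx : x ≠ 0) :
    0 < gauge Q x :=
  (gauge_pos (absorbent_nhds_zero hQ) (hcpt.isVonNBounded ℝ)).2 hx

lemma mem_iff_gauge_le_one (hconv : Convex ℝ Q) (hclosed : IsClosed Q) (hQ : Q ∈ 𝓝 0) {x : E} :
    x ∈ Q ↔ gauge Q x ≤ 1 := by
  rw [gauge_le_one_iff_mem_closure hconv hQ, hclosed.closure_eq]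

lemma smul_mem_iff_le_inv_gauge (hconv : Convex ℝ Q) (hclosed : IsClosed Q) (hQ : Q ∈ 𝓝 0)
    {x : E} (hx : 0 < gauge Q x) {r : ℝ} (hr : 0 < r) : r • x ∈ Q ↔ r ≤ (gauge Q x)⁻¹ := by
  rw [mem_iff_gauge_le_one hconv hclosed hQ, gauge_smul_of_nonneg hr.le, smul_eq_mul,
    ← one_div, le_div_iff₀ hx]

lemma gauge_eq_mul_norm_of_eq_on_sphere {c : ℝ} (hc : ∀ v ∈ sphere (0 : E) 1, gauge Q v = c)
    (x : E) : gauge Q x = c * ‖x‖ := by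
  rcases eq_or_ne x 0 with rfl | hx
  · simp
  have hnx : ‖x‖ ≠ 0 := norm_ne_zero_iff.2 hx
  have hu : ‖x‖⁻¹ • x ∈ sphere (0 : E) 1 := by
    rw [mem_sphere_zero_iff_norm, norm_smul, norm_inv, norm_norm, inv_mul_cancel₀ hnx]
  calc gauge Q x = gauge Q (‖x‖ • ‖x‖⁻¹ • x) := by rw [smul_inv_smul₀ hnx]
    _ = c * ‖x‖ := by rw [gauge_smul_of_nonneg (norm_nonneg x), hc _ hu, smul_eq_mul, mul_comm]

lemma exists_gauge_eq_on_sphere_iff [Nontrivial E] (hconv : Convex ℝ Q) (hcpt : IsCompact Q)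
    (hQ : Q ∈ 𝓝 0) :
    (∃ c, ∀ v ∈ sphere (0 : E) 1, gauge Q v = c) ↔ ∃ r, 0 < r ∧ Q = closedBall 0 r := by
  constructor
  · rintro ⟨c, hc⟩
    obtain ⟨v, hv⟩ := (NormedSpace.sphere_nonempty (x := (0 : E))).2 zero_le_one
    have hc0 : 0 < c := hc v hv ▸ gauge_pos_of_ne_zero hcpt hQ (ne_zero_of_mem_unit_sphere ⟨v, hv⟩)
    refine ⟨c⁻¹, inv_pos.2 hc0, Set.ext fun x => ?_⟩
    rw [mem_iff_gauge_le_one hconv hcpt.isClosed hQ, gauge_eq_mul_norm_of_eq_on_sphere hc,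
      mem_closedBall_zero_iff, ← one_div, le_div_iff₀ hc0, mul_comm]
  · rintro ⟨r, hr, rfl⟩
    refine ⟨r⁻¹, fun v hv => ?_⟩
    rw [gauge_closedBall hr.le, mem_sphere_zero_iff_norm.1 hv, one_div]

open Measure in
lemma integral_gauge_zpow_neg_toSphere [MeasurableSpace E] [BorelSpace E] [FiniteDimensional ℝ E]
    [Nontrivial E] (μ : Measure E) [μ.IsAddHaarMeasure] (hconv : Convex ℝ Q)
    (hcpt : IsCompact Q) (hQ : Q ∈ 𝓝 0) :
    ∫ v, gauge Q v ^ (-(Module.finrank ℝ E : ℤ)) ∂μ.toSphere = Module.finrank ℝ E * μ.real Q := by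
  set d := Module.finrank ℝ E
  have hpos : ∀ v : sphere (0 : E) 1, 0 < gauge Q v := fun v =>
    gauge_pos_of_ne_zero hcpt hQ (ne_zero_of_mem_unit_sphere v)
  have hvol := measure_eq_lintegral_toSphere_of_radial μ hcpt.isClosed.measurableSet
    (ρ := fun v => (gauge Q v)⁻¹) (fun v => inv_pos.2 (hpos v))
    (fun v _ hr => smul_mem_iff_le_inv_gauge hconv hcpt.isClosed hQ (hpos v) hr)
  have hcont : Continuous fun v : sphere (0 : E) 1 => (gauge Q v)⁻¹ ^ d / d :=
    ((((continuous_gauge hconv hQ).comp continuous_subtype_val).inv₀ fun v => (hpos v).ne').pow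
      d).div_const _
  have hint : ∫ v, (gauge Q v)⁻¹ ^ d / d ∂μ.toSphere = μ.real Q := by
    rw [integral_eq_lintegral_of_nonneg_ae (ae_of_all _ fun v => by have := hpos v; positivity)
      hcont.aestronglyMeasurable, ← hvol, measureReal_def]
  have hd : (d : ℝ) ≠ 0 := Nat.cast_ne_zero.2 Module.finrank_pos.ne'
  rw [← hint, ← integral_const_mul]
  refine integral_congr_ae (ae_of_all _ fun v => ?_)
  simp only [zpow_neg, zpow_natCast, inv_pow]
  field_simp

end Gauge

section Polar

variable {n : ℕ} {Q : Set (Euc n)}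

lemma zero_mem_polarSet : (0 : Euc n) ∈ polarSet Q := fun _ _ => by simp

lemma smul_mem_polarSet_of_mem_polarSet_smul {t : ℝ} {y : Euc n} (hy : y ∈ polarSet (t • Q)) :
    t • y ∈ polarSet Q := by
  rintro z hz
  rw [real_inner_smul_right, ← real_inner_smul_left]
  exact hy _ (smul_mem_smul_set hz)

lemma exists_mem_polarSet_one_lt_inner (hconv : Convex ℝ Q) (hclosed : IsClosed Q)
    (h0 : (0 : Euc n) ∈ Q) {x : Euc n} (hx : x ∉ Q) : ∃ y ∈ polarSet Q, 1 < ⟪x, y⟫ := by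
  obtain ⟨f, u, hfQ, hfx⟩ := geometric_hahn_banach_closed_point hconv hclosed hx
  have hu : 0 < u := by simpa using hfQ 0 h0
  have hinner : ∀ z, ⟪z, u⁻¹ • (InnerProductSpace.toDual ℝ (Euc n)).symm f⟫ = u⁻¹ * f z :=
    fun z => by rw [real_inner_smul_right, real_inner_comm, InnerProductSpace.toDual_symm_apply]
  refine ⟨u⁻¹ • (InnerProductSpace.toDual ℝ (Euc n)).symm f, fun z hz => ?_, ?_⟩
  · rw [hinner, inv_mul_le_one₀ hu]
    exact (hfQ z hz).le
  · rwa [hinner, one_lt_inv_mul₀ hu]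

lemma inner_le_gauge_of_mem_polarSet (hQ : Absorbent ℝ Q) {y : Euc n} (hy : y ∈ polarSet Q)
    (x : Euc n) : ⟪x, y⟫ ≤ gauge Q x := by
  refine le_of_forall_gt_imp_ge_of_dense fun b hb => ?_
  obtain ⟨a, ha, hab, z, hz, rfl⟩ := exists_lt_of_gauge_lt hQ hb
  rw [real_inner_smul_left]
  nlinarith [hy z hz]

lemma suppFn_polarSet_eq_gauge (hconv : Convex ℝ Q) (hclosed : IsClosed Q)
    (hQ0 : (0 : Euc n) ∈ interior Q) (x : Euc n) : suppFn (polarSet Q) x = gauge Q x := by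
  have hQ : Absorbent ℝ Q := absorbent_nhds_zero (mem_interior_iff_mem_nhds.1 hQ0)
  have hbdd : BddAbove ((fun y => ⟪x, y⟫) '' polarSet Q) :=
    ⟨gauge Q x, forall_mem_image.2 fun y hy => inner_le_gauge_of_mem_polarSet hQ hy x⟩
  have hnonneg : 0 ≤ suppFn (polarSet Q) x :=
    le_csSup_of_le hbdd (mem_image_of_mem _ zero_mem_polarSet) (inner_zero_right x).ge
  refine le_antisymm (csSup_le (image_nonempty.2 ⟨0, zero_mem_polarSet⟩)
    (forall_mem_image.2 fun y hy => inner_le_gauge_of_mem_polarSet hQ hy x)) ?_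
  by_contra! hlt
  obtain ⟨t, hst, htg⟩ := exists_between hlt
  have ht : 0 < t := hnonneg.trans_lt hst
  have hxt : x ∉ t • Q := fun hx => (gauge_le_of_mem ht.le hx).not_gt htg
  obtain ⟨y, hy, hxy⟩ := exists_mem_polarSet_one_lt_inner (hconv.smul t)
    (hclosed.smul_of_ne_zero ht.ne') (zero_mem_smul_set (interior_subset hQ0)) hxt
  refine hst.not_ge (le_csSup_of_le hbdd (mem_image_of_mem _
    (smul_mem_polarSet_of_mem_polarSet_smul hy)) ?_)
  rw [real_inner_smul_right]
  nlinarith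

end Polar

/-- `σ` is the surface-area measure of the unit sphere, normalized so that
`σ(Sⁿ⁻¹) = n ωₙ`; here it is realized as `volume.toSphere`. -/
theorem stmt12 {n : ℕ} (hn : 1 ≤ n) (Q : Set (Euc n))
    (hQcpt : IsCompact Q) (hQconv : Convex ℝ Q) (hQ0 : (0 : Euc n) ∈ interior Q) :
    ((n : ℝ) * (volume (closedBall (0 : Euc n) 1)).toReal) ^ (((n : ℝ) + 1) / (n : ℝ))
        ≤ ((n : ℝ) * (volume Q).toReal) ^ ((1 : ℝ) / (n : ℝ))
          * ∫ v : sphere (0 : Euc n) 1, suppFn (polarSet Q) (v : Euc n)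
              ∂((volume : Measure (Euc n)).toSphere) ∧
      (((n : ℝ) * (volume Q).toReal) ^ ((1 : ℝ) / (n : ℝ))
            * ∫ v : sphere (0 : Euc n) 1, suppFn (polarSet Q) (v : Euc n)
                ∂((volume : Measure (Euc n)).toSphere)
          = ((n : ℝ) * (volume (closedBall (0 : Euc n) 1)).toReal) ^ (((n : ℝ) + 1) / (n : ℝ))
        ↔ ∃ r : ℝ, 0 < r ∧ Q = closedBall (0 : Euc n) r) := by
  have : NeZero n := ⟨by omega⟩
  have hQ : Q ∈ 𝓝 0 := mem_interior_iff_mem_nhds.1 hQ0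
  set σ := (volume : Measure (Euc n)).toSphere
  have : NeZero σ := ⟨Measure.toSphere_ne_zero _⟩
  have hdim : Module.finrank ℝ (Euc n) = n := finrank_euclideanSpace_fin
  have hg : Continuous fun v : sphere (0 : Euc n) 1 => gauge Q v :=
    (continuous_gauge hQconv hQ).comp continuous_subtype_val
  have hgpos (v : sphere (0 : Euc n) 1) : 0 < gauge Q v :=
    gauge_pos_of_ne_zero hQcpt hQ (ne_zero_of_mem_unit_sphere v)
  have hS : σ.real univ = n * (volume (closedBall (0 : Euc n) 1)).toReal := by
    rw [Measure.toSphere_real_apply_univ, hdim, measureReal_def,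
      Measure.addHaar_unitClosedBall_eq_addHaar_unitBall]
  have hJ : ∫ v, gauge Q v ^ (-(n : ℤ)) ∂σ = n * (volume Q).toReal := by
    simpa only [hdim, measureReal_def] using integral_gauge_zpow_neg_toSphere volume hQconv hQcpt hQ
  simp only [suppFn_polarSet_eq_gauge hQconv hQcpt.isClosed hQ0]
  rw [← hS, ← hJ]
  have hI : 0 ≤ ∫ v, gauge Q v ∂σ := integral_nonneg fun v => (hgpos v).le
  have hJ0 : 0 ≤ ∫ v, gauge Q v ^ (-(n : ℤ)) ∂σ :=
    integral_nonneg fun v => (zpow_pos (hgpos v) _).le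
  refine ⟨(rpow_succ_div_le_iff (NeZero.ne n) measureReal_nonneg hI hJ0).2
    (measureReal_univ_pow_succ_le_integral_zpow_neg_mul_of_continuous n hg hgpos), ?_⟩
  rw [eq_comm, rpow_succ_div_eq_iff (NeZero.ne n) measureReal_nonneg hI hJ0,
    measureReal_univ_pow_succ_eq_integral_zpow_neg_mul_iff_of_continuous n hg hgpos (NeZero.ne n),
    ← exists_gauge_eq_on_sphere_iff hQconv hQcpt hQ]
  simp only [funext_iff, Subtype.forall]
end
end

section
/- For every n ≥ 1 there exist finitely many unit vectors u₁, …, u_m ∈ Sⁿ⁻¹ such that the subgroup of the orthogonal group O(n) generated by the hyperplane reflections R_{u₁}, …, R_{u_m} (where R_u x = x − 2⟨x,u⟩u) is dense in O(n). -/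
/-!
Take the reflections in `e₀` and in `w_j = cos 1 • e₀ + sin 1 • e_j` for `j ≠ 0`. The product of
the reflections in `e₀` and in `w_j` is the rotation by the angle `2` in the `(e₀, e_j)`-plane.
As `2` and `2π` are incommensurable, its powers are dense among the rotations of that plane, so
the closure `H` of the generated group contains all of them. Composing such rotations moves `e₀`
to any unit vector `v`, one coordinate at a time, so conjugating the reflection in `e₀` shows that
`H` contains the reflection in every `v`; by Cartan–Dieudonné, `H` is all of `O(n)`.
-/

open Set
open scoped RealInnerProductSpace

noncomputable section

/-- The hyperplane reflection `R_u x = x − 2⟪x,u⟫u`, as a linear isometry of `ℝⁿ`: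
reflection through the hyperplane `u^⊥`. -/
def hypReflection {n : ℕ} (u : Euc n) : Euc n ≃ₗᵢ[ℝ] Euc n :=
  Submodule.reflection (ℝ ∙ u)ᗮ

open Submodule Real

section Reflection

variable {E : Type*} [NormedAddCommGroup E] [InnerProductSpace ℝ E]

theorem reflection_orthogonal_span_singleton_apply {u : E} (hu : ‖u‖ = 1) (x : E) :
    reflection (ℝ ∙ u)ᗮ x = x - (2 * ⟪u, x⟫) • u := by
  rw [reflection_orthogonal_apply, reflection_singleton_apply, hu]
  simp only [RCLike.ofReal_real_eq_id, id, one_pow, div_one]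
  module

theorem reflection_orthogonal_span_singleton_map (f : E ≃ₗᵢ[ℝ] E) (a : E) :
    reflection (ℝ ∙ f a)ᗮ = f * reflection (ℝ ∙ a)ᗮ * f⁻¹ :=
  calc reflection (ℝ ∙ f a)ᗮ = f.symm.trans ((reflection (ℝ ∙ a)ᗮ).trans f) := by
        rw [← reflection_map]
        congr 1
        rw [map_orthogonal_equiv, Submodule.map_span, Set.image_singleton]
        rfl
    _ = f * reflection (ℝ ∙ a)ᗮ * f⁻¹ := rfl

theorem reflection_mem_of_forall_exists_apply_eq {H : Subgroup (E ≃ₗᵢ[ℝ] E)} {a : E}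
    (ha : reflection (ℝ ∙ a)ᗮ ∈ H) (hreach : ∀ v : E, ‖v‖ = 1 → ∃ U ∈ H, U a = v)
    {v : E} (hv : ‖v‖ = 1) : reflection (ℝ ∙ v)ᗮ ∈ H := by
  obtain ⟨U, hU, rfl⟩ := hreach v hv
  rw [reflection_orthogonal_span_singleton_map]
  exact mul_mem (mul_mem hU ha) (inv_mem hU)

theorem Subgroup.eq_top_of_reflection_mem [FiniteDimensional ℝ E] {H : Subgroup (E ≃ₗᵢ[ℝ] E)}
    (h : ∀ v : E, ‖v‖ = 1 → reflection (ℝ ∙ v)ᗮ ∈ H) : H = ⊤ := by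
  rw [eq_top_iff, ← LinearIsometryEquiv.reflections_generate, Subgroup.closure_le]
  rintro _ ⟨v, rfl⟩
  show reflection (ℝ ∙ v)ᗮ ∈ H
  rcases eq_or_ne v 0 with rfl | hv
  · convert H.one_mem
    ext x
    exact reflection_mem_subspace_eq_self (by simp)
  · convert h _ (norm_smul_inv_norm hv) using 3
    exact (span_singleton_smul_eq (inv_ne_zero (norm_ne_zero_iff.2 hv)).isUnit v).symm

end Reflection

section PlaneRotation

variable {E : Type*} [NormedAddCommGroup E] [InnerProductSpace ℝ E] {a b : E}

theorem norm_cos_smul_add_sin_smul (ha : ‖a‖ = 1) (hb : ‖b‖ = 1) (hab : ⟪a, b⟫ = 0) (θ : ℝ) :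
    ‖cos θ • a + sin θ • b‖ = 1 := by
  have h : ‖cos θ • a + sin θ • b‖ ^ 2 = 1 := by
    rw [norm_add_sq_real, norm_smul, norm_smul, real_inner_smul_left, real_inner_smul_right,
      hab, ha, hb, Real.norm_eq_abs, Real.norm_eq_abs]
    simp only [mul_one, mul_zero, add_zero, sq_abs, cos_sq_add_sin_sq]
  exact (pow_eq_one_iff_of_nonneg (norm_nonneg _) two_ne_zero).1 h

/-- For orthonormal `a, b`, the rotation by the angle `t` in the plane spanned by `a` and `b`. -/
def planeRotation (a b : E) (t : ℝ) : E ≃ₗᵢ[ℝ] E :=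
  reflection (ℝ ∙ (cos (t / 2) • a + sin (t / 2) • b))ᗮ * reflection (ℝ ∙ a)ᗮ

theorem planeRotation_two_mul (θ : ℝ) :
    planeRotation a b (2 * θ) =
      reflection (ℝ ∙ (cos θ • a + sin θ • b))ᗮ * reflection (ℝ ∙ a)ᗮ := by
  simp only [planeRotation, mul_div_cancel_left₀ θ two_ne_zero]

theorem planeRotation_apply (ha : ‖a‖ = 1) (hb : ‖b‖ = 1) (hab : ⟪a, b⟫ = 0) (t : ℝ) (x : E) :
    planeRotation a b t x = x + ((cos t - 1) * ⟪a, x⟫ - sin t * ⟪b, x⟫) • a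
      + (sin t * ⟪a, x⟫ + (cos t - 1) * ⟪b, x⟫) • b := by
  obtain ⟨θ, rfl⟩ : ∃ θ, t = 2 * θ := ⟨t / 2, by ring⟩
  rw [planeRotation_two_mul, LinearIsometryEquiv.coe_mul, Function.comp_apply,
    reflection_orthogonal_span_singleton_apply (norm_cos_smul_add_sin_smul ha hb hab θ),
    reflection_orthogonal_span_singleton_apply ha]
  simp only [inner_add_left, inner_sub_right, real_inner_smul_left, real_inner_smul_right,
    real_inner_self_eq_norm_sq, ha, real_inner_comm a b, hab, cos_two_mul, sin_two_mul]
  linear_combination (norm := module) (-2 * ⟪b, x⟫) • sin_sq_add_cos_sq θ • b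

theorem inner_fst_planeRotation (ha : ‖a‖ = 1) (hb : ‖b‖ = 1) (hab : ⟪a, b⟫ = 0) (t : ℝ)
    (x : E) : ⟪a, planeRotation a b t x⟫ = cos t * ⟪a, x⟫ - sin t * ⟪b, x⟫ := by
  simp only [planeRotation_apply ha hb hab, inner_add_right, real_inner_smul_right,
    real_inner_self_eq_norm_sq, ha, hab]
  ring

theorem inner_snd_planeRotation (ha : ‖a‖ = 1) (hb : ‖b‖ = 1) (hab : ⟪a, b⟫ = 0) (t : ℝ)
    (x : E) : ⟪b, planeRotation a b t x⟫ = sin t * ⟪a, x⟫ + cos t * ⟪b, x⟫ := by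
  simp only [planeRotation_apply ha hb hab, inner_add_right, real_inner_smul_right,
    real_inner_self_eq_norm_sq, hb, real_inner_comm a b, hab]
  ring

theorem inner_planeRotation_of_inner_eq_zero (ha : ‖a‖ = 1) (hb : ‖b‖ = 1) (hab : ⟪a, b⟫ = 0)
    {c : E} (hca : ⟪c, a⟫ = 0) (hcb : ⟪c, b⟫ = 0) (t : ℝ) (x : E) :
    ⟪c, planeRotation a b t x⟫ = ⟪c, x⟫ := by
  simp [planeRotation_apply ha hb hab, inner_add_right, real_inner_smul_right, hca, hcb]

theorem planeRotation_add (ha : ‖a‖ = 1) (hb : ‖b‖ = 1) (hab : ⟪a, b⟫ = 0) (s t : ℝ) :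
    planeRotation a b (s + t) = planeRotation a b s * planeRotation a b t := by
  ext1 x
  rw [LinearIsometryEquiv.coe_mul, Function.comp_apply, planeRotation_apply ha hb hab s,
    inner_fst_planeRotation ha hb hab, inner_snd_planeRotation ha hb hab,
    planeRotation_apply ha hb hab t, planeRotation_apply ha hb hab, cos_add, sin_add]
  module

theorem planeRotation_zero (ha : ‖a‖ = 1) (hb : ‖b‖ = 1) (hab : ⟪a, b⟫ = 0) :
    planeRotation a b 0 = 1 := by
  ext1 x
  simp [planeRotation_apply ha hb hab]

theorem planeRotation_neg (ha : ‖a‖ = 1) (hb : ‖b‖ = 1) (hab : ⟪a, b⟫ = 0) (t : ℝ) :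
    planeRotation a b (-t) = (planeRotation a b t)⁻¹ :=
  eq_inv_of_mul_eq_one_left <| by
    rw [← planeRotation_add ha hb hab, neg_add_cancel, planeRotation_zero ha hb hab]

theorem planeRotation_two_pi (ha : ‖a‖ = 1) (hb : ‖b‖ = 1) (hab : ⟪a, b⟫ = 0) :
    planeRotation a b (2 * π) = 1 := by
  ext1 x
  simp [planeRotation_apply ha hb hab]

theorem continuous_planeRotation (ha : ‖a‖ = 1) (hb : ‖b‖ = 1) (hab : ⟪a, b⟫ = 0) :
    Continuous fun t => (planeRotation a b t : E →L[ℝ] E) := by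
  open InnerProductSpace ContinuousLinearMap in
  have h (t : ℝ) : (planeRotation a b t : E →L[ℝ] E) = 1 + (cos t - 1) •
      (rankOne ℝ a a + rankOne ℝ b b) + sin t • (rankOne ℝ b a - rankOne ℝ a b) := by
    ext x
    simp only [LinearIsometryEquiv.coe_coe'', planeRotation_apply ha hb hab, smul_add, add_apply,
      one_apply_eq_self, smul_apply, rankOne_apply, sub_apply]
    module
  simp_rw [h]
  fun_prop

end PlaneRotation

section OpNormClosure

variable {E : Type*} [NormedAddCommGroup E] [InnerProductSpace ℝ E] [CompleteSpace E]

/-- The closure of `G` for the operator norm, computed in the unitary group of `E →L[ℝ] E`,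
which `Unitary.linearIsometryEquiv` identifies with `E ≃ₗᵢ[ℝ] E`. -/
def Subgroup.opNormClosure (G : Subgroup (E ≃ₗᵢ[ℝ] E)) : Subgroup (E ≃ₗᵢ[ℝ] E) :=
  (G.map Unitary.linearIsometryEquiv.symm.toMonoidHom).topologicalClosure.comap
    Unitary.linearIsometryEquiv.symm.toMonoidHom

theorem Subgroup.le_opNormClosure (G : Subgroup (E ≃ₗᵢ[ℝ] E)) : G ≤ G.opNormClosure :=
  fun _ hU => (G.map _).le_topologicalClosure (mem_map_of_mem _ hU)

theorem Subgroup.isClosed_setOf_mem_opNormClosure {X : Type*} [TopologicalSpace X]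
    {f : X → E ≃ₗᵢ[ℝ] E} (hf : Continuous fun x => (f x : E →L[ℝ] E))
    (G : Subgroup (E ≃ₗᵢ[ℝ] E)) : IsClosed {x | f x ∈ G.opNormClosure} :=
  (G.map _).isClosed_topologicalClosure.preimage (hf.subtype_mk _)

theorem Subgroup.exists_norm_apply_sub_lt_of_mem_opNormClosure {G : Subgroup (E ≃ₗᵢ[ℝ] E)}
    {U : E ≃ₗᵢ[ℝ] E} (hU : U ∈ G.opNormClosure) {ε : ℝ} (hε : 0 < ε) :
    ∃ W ∈ G, ∀ x : E, ‖x‖ ≤ 1 → ‖U x - W x‖ < ε := by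
  obtain ⟨_, ⟨W, hW, rfl⟩, hUW⟩ := Metric.mem_closure_iff.1 hU ε hε
  refine ⟨W, hW, fun x hx => ?_⟩
  calc ‖U x - W x‖ = ‖((U : E →L[ℝ] E) - W) x‖ := rfl
    _ ≤ ‖(U : E →L[ℝ] E) - W‖ * ‖x‖ := ContinuousLinearMap.le_opNorm _ x
    _ ≤ ‖(U : E →L[ℝ] E) - W‖ := mul_le_of_le_one_right (norm_nonneg _) hx
    _ < ε := by rwa [Subtype.dist_eq, dist_eq_norm] at hUW

theorem planeRotation_mem_opNormClosure {a b : E} (ha : ‖a‖ = 1) (hb : ‖b‖ = 1)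
    (hab : ⟪a, b⟫ = 0) {G : Subgroup (E ≃ₗᵢ[ℝ] E)} (hGa : reflection (ℝ ∙ a)ᗮ ∈ G)
    (hGw : reflection (ℝ ∙ (cos 1 • a + sin 1 • b))ᗮ ∈ G) (t : ℝ) :
    planeRotation a b t ∈ G.opNormClosure := by
  let T : AddSubgroup ℝ :=
    { carrier := {t | planeRotation a b t ∈ G.opNormClosure}
      add_mem' := fun {s t} hs ht => by
        show planeRotation a b (s + t) ∈ G.opNormClosure
        exact planeRotation_add ha hb hab s t ▸ mul_mem hs ht
      zero_mem' := by simp [planeRotation_zero ha hb hab, one_mem]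
      neg_mem' := fun {t} ht => by
        show planeRotation a b (-t) ∈ G.opNormClosure
        exact planeRotation_neg ha hb hab t ▸ inv_mem ht }
  have hT : IsClosed (T : Set ℝ) :=
    Subgroup.isClosed_setOf_mem_opNormClosure (continuous_planeRotation ha hb hab) G
  have hle : AddSubgroup.closure {2 * π, 2} ≤ T := by
    rw [AddSubgroup.closure_le, Set.pair_subset_iff]
    refine ⟨?_, ?_⟩
    · show planeRotation a b (2 * π) ∈ G.opNormClosure
      rw [planeRotation_two_pi ha hb hab]
      exact one_mem _
    · show planeRotation a b 2 ∈ G.opNormClosure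
      rw [← mul_one (2 : ℝ), planeRotation_two_mul]
      exact G.le_opNormClosure (mul_mem hGw hGa)
  have hdense : Dense (AddSubgroup.closure {2 * π, 2} : Set ℝ) :=
    dense_addSubgroupClosure_pair_iff.2 (by simp [irrational_pi])
  have hT_univ : (T : Set ℝ) = Set.univ := by
    rw [← hT.closure_eq]
    exact (hdense.mono hle).closure_eq
  exact hT_univ.ge (Set.mem_univ t)

end OpNormClosure

section EuclideanSpace

variable {ι : Type*} [Fintype ι] [DecidableEq ι]

theorem EuclideanSpace.eq_single_one_or_eq_neg_of_norm_eq_one {i : ι} {v : EuclideanSpace ℝ ι}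
    (hv : ‖v‖ = 1) (hsupp : ∀ l ≠ i, v l = 0) :
    v = EuclideanSpace.single i 1 ∨ v = -EuclideanSpace.single i 1 := by
  have hvi : v = EuclideanSpace.single i (v i) := by
    ext l
    by_cases hl : l = i
    · simp [hl]
    · simp [hl, hsupp l hl]
  have habs : |v i| = 1 := by
    rw [hvi] at hv
    simpa using hv
  rcases (abs_eq zero_le_one).1 habs with h | h
  · exact .inl (by rw [hvi, h])
  · refine .inr ?_
    rw [hvi, h]
    ext l
    by_cases hl : l = i <;> simp [hl]

theorem EuclideanSpace.exists_mem_apply_single_eq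
    {H : Subgroup (EuclideanSpace ℝ ι ≃ₗᵢ[ℝ] EuclideanSpace ℝ ι)} (i : ι)
    (hrefl : reflection (ℝ ∙ EuclideanSpace.single i (1 : ℝ))ᗮ ∈ H)
    (hrot : ∀ j ≠ i, ∀ t, planeRotation (EuclideanSpace.single i (1 : ℝ))
      (EuclideanSpace.single j 1) t ∈ H)
    {v : EuclideanSpace ℝ ι} (hv : ‖v‖ = 1) : ∃ U ∈ H, U (EuclideanSpace.single i 1) = v := by
  set e : ι → EuclideanSpace ℝ ι := fun j => EuclideanSpace.single j 1
  have he : Orthonormal ℝ e := EuclideanSpace.orthonormal_single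
  have hcoord (j : ι) (w : EuclideanSpace ℝ ι) : ⟪e j, w⟫ = w j := by
    simp [e, EuclideanSpace.inner_single_left]
  suffices ∀ s : Finset ι, ∀ v : EuclideanSpace ℝ ι, ‖v‖ = 1 → (∀ l ∉ insert i s, v l = 0) →
      ∃ U ∈ H, U (e i) = v from
    this Finset.univ v hv (by simp)
  intro s
  induction s using Finset.induction_on with
  | empty =>
    intro v hv hsupp
    rcases eq_single_one_or_eq_neg_of_norm_eq_one hv (i := i) (by simpa using hsupp) with h | h
    · exact ⟨1, H.one_mem, h.symm⟩
    · exact ⟨reflection (ℝ ∙ e i)ᗮ, hrefl, by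
        rw [reflection_orthogonalComplement_singleton_eq_neg, h]⟩
  | insert j s _ ih =>
    intro v hv hsupp
    rcases eq_or_ne j i with rfl | hji
    · exact ih v hv (by simpa using hsupp)
    obtain ⟨r, t, hvi, hvj⟩ : ∃ r t, v i = r * cos t ∧ v j = r * sin t :=
      ⟨_, _, (Complex.norm_mul_cos_arg ⟨v i, v j⟩).symm, (Complex.norm_mul_sin_arg ⟨v i, v j⟩).symm⟩
    have hi := he.1 i
    have hj := he.1 j
    have hij := he.2 hji.symm
    -- rotating by `-t` in the `(i, j)`-plane kills the `j`-th coordinate of `v`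
    obtain ⟨U, hU, hUv⟩ := ih (planeRotation (e i) (e j) (-t) v) (by simp [hv]) fun l hl => by
      rw [← hcoord]
      by_cases hlj : l = j
      · rw [hlj, inner_snd_planeRotation hi hj hij, hcoord, hcoord, hvi, hvj, sin_neg, cos_neg]
        ring
      · have hli : l ≠ i := fun h => hl (by simp [h])
        rw [inner_planeRotation_of_inner_eq_zero hi hj hij (he.2 hli) (he.2 hlj), hcoord]
        exact hsupp l (by simp_all)
    refine ⟨planeRotation (e i) (e j) t * U, mul_mem (hrot j hji t) hU, ?_⟩
    rw [LinearIsometryEquiv.coe_mul, Function.comp_apply, hUv, planeRotation_neg hi hj hij,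
      LinearIsometryEquiv.coe_inv, LinearIsometryEquiv.apply_symm_apply]

end EuclideanSpace

theorem stmt15 (n : ℕ) (hn : 1 ≤ n) :
    ∃ (m : ℕ) (u : Fin m → Euc n),
      (∀ i, ‖u i‖ = 1) ∧
      -- the subgroup generated by the reflections `R_{u i}` is dense in `O(n)`:
      -- every linear isometry `U` of `ℝⁿ` is approximated, uniformly on the unit ball,
      -- by elements of this subgroup.
      ∀ (U : Euc n ≃ₗᵢ[ℝ] Euc n) (ε : ℝ), 0 < ε →
        ∃ W ∈ Subgroup.closure (Set.range fun i => hypReflection (u i)),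
          ∀ x : Euc n, ‖x‖ ≤ 1 → ‖U x - W x‖ < ε := by
  let i : Fin n := ⟨0, hn⟩
  let e : Fin n → Euc n := fun j => EuclideanSpace.single j 1
  have he : Orthonormal ℝ e := EuclideanSpace.orthonormal_single
  let u : Fin n → Euc n := fun j => if j = i then e i else cos 1 • e i + sin 1 • e j
  refine ⟨n, u, fun j => ?_, fun U ε hε => ?_⟩
  · by_cases hj : j = i
    · simpa [u, hj] using he.1 i
    · simpa [u, hj] using norm_cos_smul_add_sin_smul (he.1 i) (he.1 j) (he.2 (Ne.symm hj)) 1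
  set G := Subgroup.closure (Set.range fun j => hypReflection (u j))
  have hGu (j : Fin n) : reflection (ℝ ∙ u j)ᗮ ∈ G := Subgroup.subset_closure ⟨j, rfl⟩
  have hGi : reflection (ℝ ∙ e i)ᗮ ∈ G := by simpa [u] using hGu i
  have hrot (j : Fin n) (hj : j ≠ i) (t : ℝ) : planeRotation (e i) (e j) t ∈ G.opNormClosure :=
    planeRotation_mem_opNormClosure (he.1 i) (he.1 j) (he.2 hj.symm) hGi
      (by simpa [u, hj] using hGu j) t
  have htop : G.opNormClosure = ⊤ :=
    Subgroup.eq_top_of_reflection_mem fun v hv =>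
      reflection_mem_of_forall_exists_apply_eq (G.le_opNormClosure hGi)
        (fun w hw => EuclideanSpace.exists_mem_apply_single_eq i (G.le_opNormClosure hGi) hrot hw)
        hv
  exact Subgroup.exists_norm_apply_sub_lt_of_mem_opNormClosure (htop ▸ Subgroup.mem_top U) hε
end
end

section
/- Let n ≥ 1 and let g : ℝⁿ → [0,∞) be a function such that for some t > 0 the superlevel set {x : g(x) ≥ t} is nonempty and bounded. Suppose that for every U ∈ O(n) there exists a_U ∈ ℝⁿ with g(U⁻¹x) = g(x + a_U) for all x ∈ ℝⁿ. Then there exists b ∈ ℝⁿ such that the translate x ↦ g(x + b) is radial: g(b + Ux) = g(b + x) for every U ∈ O(n) and every x ∈ ℝⁿ. (In particular this applies to any g ∈ LCₙ whose surface area measures are invariant under all rotations up to translation.) -/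
/-!
The superlevel set `S = {g ≥ t}` is nonempty and bounded, so it has a unique Chebyshev center `c`
(the center of the smallest closed ball containing `S`): it exists by compactness, and two
distinct centers would make their midpoint a strictly better one by the parallelogram law.
For each `U`, the affine isometry `x ↦ U x + a_U` maps `S` onto itself, hence fixes `c`,
i.e. `U c + a_U = c`; this is exactly the radial symmetry of `g` about `c`.
-/

open Set

noncomputable section

section ChebyshevRadius

variable {α β : Type*} [MetricSpace α] [MetricSpace β]

def chebyshevRadius (S : Set α) (c : α) : ℝ := sSup (dist c '' S)

theorem dist_le_chebyshevRadius {S : Set α} (hS : Bornology.IsBounded S) (c : α) {x : α}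
    (hx : x ∈ S) : dist c x ≤ chebyshevRadius S c := by
  obtain ⟨r, hr⟩ := (Metric.isBounded_iff_subset_closedBall c).1 hS
  refine le_csSup ⟨r, forall_mem_image.2 fun y hy => ?_⟩ (mem_image_of_mem _ hx)
  simpa [dist_comm] using hr hy

theorem chebyshevRadius_le {S : Set α} (hS : S.Nonempty) {c : α} {r : ℝ}
    (h : ∀ x ∈ S, dist c x ≤ r) : chebyshevRadius S c ≤ r :=
  csSup_le (hS.image _) (forall_mem_image.2 h)

theorem lipschitzWith_chebyshevRadius {S : Set α} (hne : S.Nonempty)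
    (hS : Bornology.IsBounded S) : LipschitzWith 1 (chebyshevRadius S) :=
  LipschitzWith.of_le_add fun c c' => chebyshevRadius_le hne fun x hx => by
    linarith [dist_triangle c c' x, dist_le_chebyshevRadius hS c' hx]

theorem chebyshevRadius_preimage (e : α ≃ᵢ β) (S : Set β) (c : α) :
    chebyshevRadius (e ⁻¹' S) c = chebyshevRadius S (e c) := by
  unfold chebyshevRadius
  conv_rhs => rw [← e.surjective.image_preimage S, ← image_comp]
  exact congrArg sSup (image_congr fun x _ => (e.dist_eq c x).symm)

theorem exists_forall_chebyshevRadius_le [ProperSpace α] {S : Set α} (hne : S.Nonempty)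
    (hS : Bornology.IsBounded S) : ∃ c, ∀ c', chebyshevRadius S c ≤ chebyshevRadius S c' := by
  obtain ⟨x₀, hx₀⟩ := hne
  have : Nonempty α := ⟨x₀⟩
  refine (lipschitzWith_chebyshevRadius ⟨x₀, hx₀⟩ hS).continuous.exists_forall_le ?_
  exact Filter.tendsto_atTop_mono (fun c => dist_le_chebyshevRadius hS c hx₀)
    (tendsto_dist_right_cocompact_atTop x₀)

end ChebyshevRadius

theorem eq_of_forall_chebyshevRadius_le {V P : Type*} [NormedAddCommGroup V]
    [InnerProductSpace ℝ V] [MetricSpace P] [NormedAddTorsor V P] {S : Set P}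
    (hne : S.Nonempty) (hS : Bornology.IsBounded S) {c₁ c₂ : P}
    (h₁ : ∀ c, chebyshevRadius S c₁ ≤ chebyshevRadius S c)
    (h₂ : ∀ c, chebyshevRadius S c₂ ≤ chebyshevRadius S c) : c₁ = c₂ := by
  obtain ⟨x₀, hx₀⟩ := hne
  set r := chebyshevRadius S c₁
  set d := dist c₁ c₂
  have hr₂ : chebyshevRadius S c₂ = r := le_antisymm (h₂ c₁) (h₁ c₂)
  have hd₀ : 0 ≤ d := dist_nonneg
  have hd : d ≤ 2 * r := by
    linarith [dist_triangle_right c₁ c₂ x₀, dist_le_chebyshevRadius hS c₁ hx₀,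
      dist_le_chebyshevRadius hS c₂ hx₀]
  have hr : 0 ≤ r := dist_nonneg.trans (dist_le_chebyshevRadius hS c₁ hx₀)
  have hmid : chebyshevRadius S (midpoint ℝ c₁ c₂) ≤ √(r ^ 2 - (d / 2) ^ 2) := by
    refine chebyshevRadius_le ⟨x₀, hx₀⟩ fun x hx => Real.le_sqrt_of_sq_le ?_
    have hx₁ : dist x c₁ ^ 2 ≤ r ^ 2 := pow_le_pow_left₀ dist_nonneg
      (dist_comm x c₁ ▸ dist_le_chebyshevRadius hS c₁ hx) 2
    have hx₂ : dist x c₂ ^ 2 ≤ r ^ 2 := pow_le_pow_left₀ dist_nonneg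
      (dist_comm x c₂ ▸ hr₂ ▸ dist_le_chebyshevRadius hS c₂ hx) 2
    have := EuclideanGeometry.dist_sq_add_dist_sq_eq_two_mul_dist_midpoint_sq_add_half_dist_sq
      x c₁ c₂
    rw [dist_comm]
    linarith
  have := (Real.le_sqrt hr (by nlinarith)).1 ((h₁ _).trans hmid)
  exact dist_eq_zero.1 (by nlinarith)

theorem IsometryEquiv.apply_eq_self_of_preimage_eq {V P : Type*} [NormedAddCommGroup V]
    [InnerProductSpace ℝ V] [MetricSpace P] [NormedAddTorsor V P] {S : Set P}
    (hne : S.Nonempty) (hS : Bornology.IsBounded S) {c : P}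
    (hc : ∀ c', chebyshevRadius S c ≤ chebyshevRadius S c') (e : P ≃ᵢ P) (he : e ⁻¹' S = S) :
    e c = c := by
  refine eq_of_forall_chebyshevRadius_le hne hS (fun c' => ?_) hc
  rw [← chebyshevRadius_preimage, he]
  exact hc c'

theorem stmt17_general {n : ℕ} (g : Euc n → ℝ)
    (t : ℝ)
    (hne : {x : Euc n | t ≤ g x}.Nonempty)
    (hbd : Bornology.IsBounded {x : Euc n | t ≤ g x})
    (htrans : ∀ U : Euc n ≃ₗᵢ[ℝ] Euc n, ∃ a : Euc n,
      ∀ x : Euc n, g (U.symm x) = g (x + a)) :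
    ∃ b : Euc n, ∀ (U : Euc n ≃ₗᵢ[ℝ] Euc n) (x : Euc n), g (b + U x) = g (b + x) := by
  obtain ⟨c, hc⟩ := exists_forall_chebyshevRadius_le hne hbd
  refine ⟨c, fun U x => ?_⟩
  obtain ⟨a, ha⟩ := htrans U
  have hS : (U.toIsometryEquiv.trans (IsometryEquiv.addRight a)) ⁻¹' {x | t ≤ g x} =
      {x | t ≤ g x} := by
    ext y
    simp [← ha]
  have hUc : U c + a = c := IsometryEquiv.apply_eq_self_of_preimage_eq hne hbd hc _ hS
  calc g (c + U x) = g (U (c + x) + a) := by rw [map_add, add_right_comm, hUc]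
    _ = g (c + x) := by rw [← ha, U.symm_apply_apply]

theorem stmt17 {n : ℕ} (hn : 1 ≤ n) (g : Euc n → ℝ) (hg0 : ∀ x, 0 ≤ g x)
    (t : ℝ) (ht : 0 < t)
    (hne : {x : Euc n | t ≤ g x}.Nonempty)
    (hbd : Bornology.IsBounded {x : Euc n | t ≤ g x})
    (htrans : ∀ U : Euc n ≃ₗᵢ[ℝ] Euc n, ∃ a : Euc n,
      ∀ x : Euc n, g (U.symm x) = g (x + a)) :
    ∃ b : Euc n, ∀ (U : Euc n ≃ₗᵢ[ℝ] Euc n) (x : Euc n), g (b + U x) = g (b + x) :=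
  stmt17_general g t hne hbd htrans

end
end
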